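/- arXiv:1809.04831 — 4 statements merged into one kernel-verified Lean document; each statement's English description precedes it below -/
import Mathlib

section
/- Let X ⊆ ℝ^n, let g be a metric on X, let f : X → ℝ^n be a vector field, and let x ∈ X. Then every v ∈ Π^g_X f(x) satisfies ⟨f(x), v⟩_{g(x)} = ‖v‖²_{g(x)}. If moreover X is Clarke regular at x, then Π^g_X f(x) is a singleton, and writing Π^g_X f(x) = {f(x) − η̂}, the vector η̂ is the unique minimizer of ‖η − f(x)‖_{g(x)} over η ∈ N^g_x X, and f(x) − η̂ ∈ T_x X with ⟨f(x) − η̂, η̂⟩_{g(x)} = 0. -/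
open MeasureTheory Filter Topology Set
open scoped RealInnerProductSpace

/-- Euclidean space ℝ^n. -/
abbrev Euc (n : ℕ) := EuclideanSpace ℝ (Fin n)

variable {n : ℕ}

/-- The tangent (contingent) cone of `X` at `x`. -/
def tanCone (X : Set (Euc n)) (x : Euc n) : Set (Euc n) :=
  {v | ∃ (xk : ℕ → Euc n) (δ : ℕ → ℝ),
    (∀ k, xk k ∈ X) ∧ Tendsto xk atTop (𝓝 x) ∧
    (∀ k, 0 < δ k) ∧ Tendsto δ atTop (𝓝 0) ∧
    Tendsto (fun k => (δ k)⁻¹ • (xk k - x)) atTop (𝓝 v)}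

/-- The Clarke tangent cone of `X` at `x` (inner limit of tangent cones). -/
def clarkeCone (X : Set (Euc n)) (x : Euc n) : Set (Euc n) :=
  {v | ∀ yk : ℕ → Euc n, (∀ k, yk k ∈ X) → Tendsto yk atTop (𝓝 x) →
    ∃ vk : ℕ → Euc n, (∀ k, vk k ∈ tanCone X (yk k)) ∧ Tendsto vk atTop (𝓝 v)}

/-- A set is locally compact if it is the intersection of a closed and an open set. -/
def LocCompactSet (X : Set (Euc n)) : Prop :=
  ∃ C U : Set (Euc n), IsClosed C ∧ IsOpen U ∧ X = C ∩ U

/-- `X` is Clarke regular: locally compact and tangent cone equals Clarke tangent cone. -/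
def ClarkeRegular (X : Set (Euc n)) : Prop :=
  LocCompactSet X ∧ ∀ x ∈ X, tanCone X x = clarkeCone X x

/-- A (Riemannian) metric: an inner product `B x` on ℝ^n for every point `x`. -/
structure VarMetric (n : ℕ) where
  B : Euc n → Euc n →L[ℝ] Euc n →L[ℝ] ℝ
  symm : ∀ x v w, B x v w = B x w v
  posdef : ∀ x v, v ≠ 0 → 0 < B x v v

namespace VarMetric

/-- The norm induced by the metric at `x`. -/
noncomputable def gnorm (g : VarMetric n) (x v : Euc n) : ℝ := Real.sqrt (g.B x v v)

/-- Maximum eigenvalue (max of the `g`-norm over the Euclidean unit sphere). -/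
noncomputable def maxEig (g : VarMetric n) (x : Euc n) : ℝ :=
  sSup {r | ∃ v : Euc n, ‖v‖ = 1 ∧ r = g.gnorm x v}

/-- Minimum eigenvalue (min of the `g`-norm over the Euclidean unit sphere). -/
noncomputable def minEig (g : VarMetric n) (x : Euc n) : ℝ :=
  sInf {r | ∃ v : Euc n, ‖v‖ = 1 ∧ r = g.gnorm x v}

/-- Condition number of the metric at `x`. -/
noncomputable def cond (g : VarMetric n) (x : Euc n) : ℝ := g.maxEig x / g.minEig x

end VarMetric

/-- The projected vector field: `g`-closest points to `f x` in the tangent cone. -/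
noncomputable def projVF (X : Set (Euc n)) (g : VarMetric n) (f : Euc n → Euc n)
    (x : Euc n) : Set (Euc n) :=
  {v | v ∈ tanCone X x ∧ ∀ w ∈ tanCone X x, g.gnorm x (v - f x) ≤ g.gnorm x (w - f x)}

/-- Krasovskii regularization of a set-valued map `F` on `X`. -/
def kras (X : Set (Euc n)) (F : Euc n → Set (Euc n)) (x : Euc n) : Set (Euc n) :=
  closure (convexHull ℝ {v | ∃ (xk : ℕ → Euc n) (vk : ℕ → Euc n),
    (∀ k, xk k ∈ X) ∧ Tendsto xk atTop (𝓝 x) ∧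
    (∀ k, vk k ∈ F (xk k)) ∧ Tendsto vk atTop (𝓝 v)})

/-- Carathéodory solution of `ẋ ∈ F(x)`, `x 0 = x₀`, on the interval `I`
(`I = Set.Ico 0 T`, or `Set.Ici 0` for complete solutions). -/
def IsSolOn (X : Set (Euc n)) (F : Euc n → Set (Euc n)) (x₀ : Euc n)
    (x : ℝ → Euc n) (I : Set ℝ) : Prop :=
  x 0 = x₀ ∧ (∀ t ∈ I, x t ∈ X) ∧
  ∃ v : ℝ → Euc n, LocallyIntegrableOn v I volume ∧
    (∀ t ∈ I, x t = x₀ + ∫ s in (0:ℝ)..t, v s) ∧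
    (∀ᵐ t ∂(volume.restrict I), v t ∈ F (x t))

/-- The normal cone of `X` at `x` with respect to the metric `g` (polar of the Clarke cone). -/
def normalCone (X : Set (Euc n)) (g : VarMetric n) (x : Euc n) : Set (Euc n) :=
  {η | ∀ v ∈ clarkeCone X x, g.B x v η ≤ 0}

lemma inv_succ_tendsto : Tendsto (fun k : ℕ => ((k:ℝ)+1)⁻¹) atTop (𝓝 0) :=
  tendsto_one_div_add_atTop_nhds_zero_nat.congr (by intro k; simp [one_div])

lemma tan_zero_mem {X : Set (Euc n)} {x : Euc n} (hx : x ∈ X) : (0 : Euc n) ∈ tanCone X x := by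
  refine ⟨fun _ => x, fun k => (k+1:ℝ)⁻¹, fun _ => hx, tendsto_const_nhds, ?_,
    inv_succ_tendsto, ?_⟩
  · intro k; positivity
  · simpa using (tendsto_const_nhds : Tendsto (fun _ : ℕ => (0:Euc n)) atTop (𝓝 0))

lemma tan_smul_mem {X : Set (Euc n)} {x v : Euc n} {c : ℝ} (hc : 0 < c)
    (hv : v ∈ tanCone X x) : c • v ∈ tanCone X x := by
  obtain ⟨xk, δ, hX, hxk, hδ, hδ0, hlim⟩ := hv
  refine ⟨xk, fun k => c⁻¹ * δ k, hX, hxk,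
    fun k => mul_pos (inv_pos.2 hc) (hδ k), ?_, ?_⟩
  · simpa using (hδ0.const_mul c⁻¹)
  · have h := hlim.const_smul c
    refine h.congr (fun k => ?_)
    simp only [smul_smul, mul_inv, inv_inv]

lemma isClosed_tanCone (X : Set (Euc n)) (x : Euc n) : IsClosed (tanCone X x) := by
  rw [← closure_subset_iff_isClosed]
  intro v hv
  obtain ⟨vs, hvs, hvsl⟩ := mem_closure_iff_seq_limit.1 hv
  -- for each m, extract a good index
  have key : ∀ m : ℕ, ∃ (y : Euc n) (d : ℝ), y ∈ X ∧ 0 < d ∧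
      dist y x ≤ ((m:ℝ)+1)⁻¹ ∧ d ≤ ((m:ℝ)+1)⁻¹ ∧
      ‖d⁻¹ • (y - x) - vs m‖ ≤ ((m:ℝ)+1)⁻¹ := by
    intro m
    obtain ⟨xk, δ, hX, hxk, hδ, hδ0, hlim⟩ := hvs m
    have e1 : ∀ᶠ k in atTop, dist (xk k) x ≤ ((m:ℝ)+1)⁻¹ := by
      have := Metric.tendsto_atTop.1 hxk (((m:ℝ)+1)⁻¹) (by positivity)
      obtain ⟨N, hN⟩ := this
      exact eventually_atTop.2 ⟨N, fun k hk => (hN k hk).le⟩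
    have e2 : ∀ᶠ k in atTop, δ k ≤ ((m:ℝ)+1)⁻¹ := by
      have := Metric.tendsto_atTop.1 hδ0 (((m:ℝ)+1)⁻¹) (by positivity)
      obtain ⟨N, hN⟩ := this
      refine eventually_atTop.2 ⟨N, fun k hk => ?_⟩
      have := hN k hk
      rw [Real.dist_eq, sub_zero, abs_of_pos (hδ k)] at this
      exact this.le
    have e3 : ∀ᶠ k in atTop, ‖(δ k)⁻¹ • (xk k - x) - vs m‖ ≤ ((m:ℝ)+1)⁻¹ := by
      have := Metric.tendsto_atTop.1 hlim (((m:ℝ)+1)⁻¹) (by positivity)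
      obtain ⟨N, hN⟩ := this
      refine eventually_atTop.2 ⟨N, fun k hk => ?_⟩
      have := hN k hk
      rw [dist_eq_norm] at this
      exact this.le
    obtain ⟨k, ⟨h1, h2⟩, h3⟩ := ((e1.and e2).and e3).exists
    exact ⟨xk k, δ k, hX k, hδ k, h1, h2, h3⟩
  choose y d hyX hd hyx hdle hnorm using key
  refine ⟨y, d, hyX, ?_, hd, ?_, ?_⟩
  · refine (Metric.tendsto_atTop).2 (fun ε hε => ?_)
    obtain ⟨N, hN⟩ := exists_nat_gt ε⁻¹
    refine ⟨N, fun m hm => lt_of_le_of_lt (hyx m) ?_⟩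
    rw [inv_lt_comm₀ (by positivity) hε]
    calc ε⁻¹ < N := hN
    _ ≤ (m:ℝ) := by exact_mod_cast hm
    _ < m + 1 := by linarith
  · refine squeeze_zero (fun m => (hd m).le) hdle inv_succ_tendsto
  · rw [tendsto_iff_norm_sub_tendsto_zero]
    refine squeeze_zero (fun m => norm_nonneg _) (g := fun m : ℕ => ((m:ℝ)+1)⁻¹ + ‖vs m - v‖)
      (fun m => ?_) ?_
    · calc ‖(d m)⁻¹ • (y m - x) - v‖ ≤ ‖(d m)⁻¹ • (y m - x) - vs m‖ + ‖vs m - v‖ := by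
            have := norm_sub_le_norm_sub_add_norm_sub ((d m)⁻¹ • (y m - x)) (vs m) v
            exact this
      _ ≤ ((m:ℝ)+1)⁻¹ + ‖vs m - v‖ := by gcongr; exact hnorm m
    · have : Tendsto (fun m => ‖vs m - v‖) atTop (𝓝 0) :=
        tendsto_iff_norm_sub_tendsto_zero.1 hvsl
      simpa using inv_succ_tendsto.add this


/-- Near `x`, every point of `X` has a tangent vector close to `v`. -/
lemma clarke_approx {X : Set (Euc n)} {x v : Euc n} (hx : x ∈ X)
    (hv : v ∈ clarkeCone X x) :
    ∀ ε > (0:ℝ), ∃ δ > (0:ℝ), ∀ y ∈ X, dist y x < δ →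
      ∃ w ∈ tanCone X y, ‖w - v‖ ≤ ε := by
  intro ε hε
  by_contra hcon
  push_neg at hcon
  have key : ∀ m : ℕ, ∃ y ∈ X, dist y x < ((m:ℝ)+1)⁻¹ ∧
      ∀ w ∈ tanCone X y, ε < ‖w - v‖ := by
    intro m
    obtain ⟨y, hyX, hyd, hw⟩ := hcon (((m:ℝ)+1)⁻¹) (by positivity)
    exact ⟨y, hyX, hyd, hw⟩
  choose y hyX hyd hw using key
  have hyx : Tendsto y atTop (𝓝 x) := by
    refine (tendsto_iff_dist_tendsto_zero).2 ?_
    exact squeeze_zero (fun m => dist_nonneg) (fun m => (hyd m).le) inv_succ_tendsto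
  obtain ⟨vk, hvk, hvkl⟩ := hv y hyX hyx
  have : ∀ᶠ k in atTop, dist (vk k) v < ε := by
    have := Metric.tendsto_atTop.1 hvkl ε hε
    obtain ⟨N, hN⟩ := this
    exact eventually_atTop.2 ⟨N, hN⟩
  obtain ⟨k, hk⟩ := this.exists
  have := hw k (vk k) (hvk k)
  rw [dist_eq_norm] at hk
  linarith

/-- Key viability step: from a point `y` near `x` one can move along `v` for time `t`
staying `2εt`-close, inside the locally compact set `X = Cl ∩ U`. -/
lemma reach {X Cl U : Set (Euc n)} (hCl : IsClosed Cl) (hU : IsOpen U)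
    (hXCU : X = Cl ∩ U) {x v : Euc n} {ε ρ : ℝ} (hε : 0 < ε) (hρ : 0 < ρ)
    (hball : Metric.ball x ρ ⊆ U)
    (htan : ∀ y ∈ X, dist y x < ρ → ∃ w ∈ tanCone X y, ‖w - v‖ ≤ ε)
    {y : Euc n} (hyX : y ∈ X) (hyx : dist y x < ρ/2)
    {t : ℝ} (ht : 0 < t) (htb : t * (‖v‖ + 2*ε) < ρ/2) :
    ∃ z ∈ X, ‖z - (y + t • v)‖ ≤ 2*ε*t := by
  -- the reachable-time set, as projection of a compact set
  set Bs : Set (ℝ × Euc n) := {p | p.1 ∈ Icc 0 t ∧ p.2 ∈ Cl ∧ ‖p.2 - x‖ ≤ ρ ∧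
    ‖p.2 - y‖ ≤ p.1 * (‖v‖ + 2*ε) ∧ ‖p.2 - (y + p.1 • v)‖ ≤ 2*ε*p.1} with hBs
  -- membership in X from the bounds
  have memX : ∀ s : ℝ, 0 ≤ s → s ≤ t → ∀ z : Euc n, z ∈ Cl → ‖z - y‖ ≤ s * (‖v‖ + 2*ε) →
      z ∈ X ∧ dist z x < ρ := by
    intro s hs0 hst z hzCl hzy
    have h1 : ‖z - x‖ < ρ := by
      calc ‖z - x‖ ≤ ‖z - y‖ + ‖y - x‖ := norm_sub_le_norm_sub_add_norm_sub z y x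
        _ ≤ s * (‖v‖ + 2*ε) + ‖y - x‖ := by gcongr
        _ ≤ t * (‖v‖ + 2*ε) + ‖y - x‖ := by gcongr
        _ < ρ/2 + ρ/2 := by rw [← dist_eq_norm] at *; exact add_lt_add htb hyx
        _ = ρ := by ring
    have hzU : z ∈ U := hball (by simpa [Metric.mem_ball, dist_eq_norm] using h1)
    exact ⟨hXCU ▸ ⟨hzCl, hzU⟩, by simpa [dist_eq_norm] using h1⟩
  have hBcompact : IsCompact Bs := by
    have hsub : Bs ⊆ (Icc (0:ℝ) t) ×ˢ (Metric.closedBall x ρ) := by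
      rintro ⟨s, z⟩ ⟨h1, h2, h3, h4, h5⟩
      exact ⟨h1, by simpa [Metric.mem_closedBall, dist_eq_norm] using h3⟩
    have hclosed : IsClosed Bs := by
      have c1 : IsClosed {p : ℝ × Euc n | p.1 ∈ Icc 0 t} :=
        isClosed_Icc.preimage continuous_fst
      have c2 : IsClosed {p : ℝ × Euc n | p.2 ∈ Cl} := hCl.preimage continuous_snd
      have c3 : IsClosed {p : ℝ × Euc n | ‖p.2 - x‖ ≤ ρ} := by
        apply isClosed_le (by fun_prop) continuous_const
      have c4 : IsClosed {p : ℝ × Euc n | ‖p.2 - y‖ ≤ p.1 * (‖v‖ + 2*ε)} := by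
        apply isClosed_le (by fun_prop) (by fun_prop)
      have c5 : IsClosed {p : ℝ × Euc n | ‖p.2 - (y + p.1 • v)‖ ≤ 2*ε*p.1} := by
        apply isClosed_le (by fun_prop) (by fun_prop)
      have : Bs = ({p : ℝ × Euc n | p.1 ∈ Icc 0 t} ∩ {p | p.2 ∈ Cl} ∩ {p | ‖p.2 - x‖ ≤ ρ}
          ∩ {p | ‖p.2 - y‖ ≤ p.1 * (‖v‖ + 2*ε)} ∩ {p | ‖p.2 - (y + p.1 • v)‖ ≤ 2*ε*p.1}) := by
        ext p; simp only [hBs, mem_setOf_eq, mem_inter_iff]; tauto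
      rw [this]
      exact (((c1.inter c2).inter c3).inter c4).inter c5
    exact IsCompact.of_isClosed_subset ((isCompact_Icc).prod (isCompact_closedBall x ρ))
      hclosed hsub
  set A := Prod.fst '' Bs with hA
  have h0A : (0:ℝ) ∈ A := by
    refine ⟨(0, y), ⟨⟨le_refl 0, ht.le⟩, ?_, ?_, by simp, by simp⟩, rfl⟩
    · exact (hXCU ▸ hyX).1
    · rw [← dist_eq_norm]; linarith
  have hAne : A.Nonempty := ⟨0, h0A⟩
  have hAcomp : IsCompact A := hBcompact.image continuous_fst
  have hsup_mem := hAcomp.sSup_mem hAne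
  obtain ⟨⟨s, z⟩, hmem, hfst⟩ := hsup_mem
  simp only at hfst
  obtain ⟨hsI, hzCl, hzx, hzy, hzv⟩ := hmem
  have hzX : z ∈ X ∧ dist z x < ρ := memX s hsI.1 hsI.2 z hzCl hzy
  have hst : s = t := by
    by_contra hne
    have hslt : s < t := lt_of_le_of_ne hsI.2 hne
    obtain ⟨w, hwT, hwv⟩ := htan z hzX.1 hzX.2
    obtain ⟨xk, δ, hXk, hxkz, hδpos, hδ0, hlim⟩ := hwT
    have e1 : ∀ᶠ k in atTop, δ k < t - s := by
      have := Metric.tendsto_atTop.1 hδ0 (t - s) (by linarith)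
      obtain ⟨N, hN⟩ := this
      refine eventually_atTop.2 ⟨N, fun k hk => ?_⟩
      have := hN k hk
      rwa [Real.dist_eq, sub_zero, abs_of_pos (hδpos k)] at this
    have e2 : ∀ᶠ k in atTop, ‖(δ k)⁻¹ • (xk k - z) - w‖ ≤ ε := by
      have := Metric.tendsto_atTop.1 hlim ε hε
      obtain ⟨N, hN⟩ := this
      refine eventually_atTop.2 ⟨N, fun k hk => ?_⟩
      have := hN k hk
      rw [dist_eq_norm] at this
      exact this.le
    obtain ⟨k, h1, h2⟩ := (e1.and e2).exists
    set h := δ k with hh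
    have hhpos : 0 < h := hδpos k
    set z' := xk k with hz'
    have hz'w : ‖z' - z - h • w‖ ≤ ε * h := by
      have : z' - z - h • w = h • ((h⁻¹ • (z' - z)) - w) := by
        rw [smul_sub, smul_smul, mul_inv_cancel₀ hhpos.ne', one_smul]
      rw [this, norm_smul, Real.norm_eq_abs, abs_of_pos hhpos, mul_comm]
      exact mul_le_mul_of_nonneg_right h2 hhpos.le
    have hz'v : ‖z' - z - h • v‖ ≤ 2 * ε * h := by
      calc ‖z' - z - h • v‖ = ‖(z' - z - h • w) + h • (w - v)‖ := by
            congr 1; rw [smul_sub]; abel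
        _ ≤ ‖z' - z - h • w‖ + ‖h • (w - v)‖ := norm_add_le _ _
        _ ≤ ε * h + h * ε := by
            refine add_le_add hz'w ?_
            rw [norm_smul, Real.norm_eq_abs, abs_of_pos hhpos]
            exact mul_le_mul_of_nonneg_left hwv hhpos.le
        _ = 2 * ε * h := by ring
    have hz'z : ‖z' - z‖ ≤ h * ‖v‖ + 2 * ε * h := by
      calc ‖z' - z‖ = ‖(z' - z - h • v) + h • v‖ := by congr 1; abel
        _ ≤ ‖z' - z - h • v‖ + ‖h • v‖ := norm_add_le _ _
        _ ≤ 2 * ε * h + h * ‖v‖ := by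
            refine add_le_add hz'v ?_
            rw [norm_smul, Real.norm_eq_abs, abs_of_pos hhpos]
        _ = h * ‖v‖ + 2 * ε * h := by ring
    have hz'y : ‖z' - y‖ ≤ (s + h) * (‖v‖ + 2*ε) := by
      calc ‖z' - y‖ ≤ ‖z' - z‖ + ‖z - y‖ := norm_sub_le_norm_sub_add_norm_sub _ _ _
        _ ≤ (h * ‖v‖ + 2 * ε * h) + s * (‖v‖ + 2*ε) := add_le_add hz'z hzy
        _ = (s + h) * (‖v‖ + 2*ε) := by ring
    have hmem' : (s + h, z') ∈ Bs := by
      have hsh : s + h ≤ t := by linarith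
      have hz'X := memX (s+h) (add_nonneg hsI.1 hhpos.le) hsh z' ((hXCU ▸ hXk k).1) hz'y
      refine ⟨⟨add_nonneg hsI.1 hhpos.le, hsh⟩, (hXCU ▸ hXk k).1, ?_, hz'y, ?_⟩
      · rw [← dist_eq_norm]; exact hz'X.2.le
      · calc ‖z' - (y + (s+h) • v)‖ = ‖(z' - z - h • v) + (z - (y + s • v))‖ := by
              congr 1; rw [add_smul]; abel
          _ ≤ ‖z' - z - h • v‖ + ‖z - (y + s • v)‖ := norm_add_le _ _
          _ ≤ 2 * ε * h + 2 * ε * s := add_le_add hz'v hzv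
          _ = 2 * ε * (s + h) := by ring
    have : s + h ≤ sSup A := le_csSup hAcomp.bddAbove ⟨(s+h, z'), hmem', rfl⟩
    rw [← hfst] at this
    linarith
  subst hst
  exact ⟨z, hzX.1, hzv⟩

/-- The classical Clarke tangent cone (derivable directions). -/
def dCone (X : Set (Euc n)) (x : Euc n) : Set (Euc n) :=
  {v | ∀ (xk : ℕ → Euc n) (tk : ℕ → ℝ), (∀ k, xk k ∈ X) → Tendsto xk atTop (𝓝 x) →
    (∀ k, 0 < tk k) → Tendsto tk atTop (𝓝 0) →
    ∃ vk : ℕ → Euc n, (∀ k, xk k + tk k • vk k ∈ X) ∧ Tendsto vk atTop (𝓝 v)}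

lemma dCone_subset_tan {X : Set (Euc n)} {x : Euc n} (hx : x ∈ X) :
    dCone X x ⊆ tanCone X x := by
  intro v hv
  obtain ⟨vk, hvkX, hvkl⟩ := hv (fun _ => x) (fun k => ((k:ℝ)+1)⁻¹) (fun _ => hx)
    tendsto_const_nhds (fun k => by positivity) inv_succ_tendsto
  refine ⟨fun k : ℕ => x + ((k:ℝ)+1)⁻¹ • vk k, fun k : ℕ => ((k:ℝ)+1)⁻¹, hvkX, ?_,
    fun k => by positivity, inv_succ_tendsto, ?_⟩
  · have : Tendsto (fun k : ℕ => ((k:ℝ)+1)⁻¹ • vk k) atTop (𝓝 0) := by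
      simpa using inv_succ_tendsto.smul hvkl
    simpa using (tendsto_const_nhds (x := x)).add this
  · refine hvkl.congr (fun k => ?_)
    have hk : ((k:ℝ)+1)⁻¹ ≠ 0 := by positivity
    rw [add_sub_cancel_left, smul_smul, inv_inv, mul_inv_cancel₀ (by positivity), one_smul]

lemma dCone_add {X : Set (Euc n)} {x : Euc n} {u w : Euc n}
    (hu : u ∈ dCone X x) (hw : w ∈ dCone X x) : u + w ∈ dCone X x := by
  intro xk tk hX hxk htk htk0
  obtain ⟨uk, hukX, hukl⟩ := hu xk tk hX hxk htk htk0
  have hX' : ∀ k, xk k + tk k • uk k ∈ X := hukX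
  have hxk' : Tendsto (fun k => xk k + tk k • uk k) atTop (𝓝 x) := by
    have : Tendsto (fun k => tk k • uk k) atTop (𝓝 ((0:ℝ) • u)) := htk0.smul hukl
    rw [zero_smul] at this
    simpa using hxk.add this
  obtain ⟨wk, hwkX, hwkl⟩ := hw _ tk hX' hxk' htk htk0
  refine ⟨fun k => uk k + wk k, fun k => ?_, hukl.add hwkl⟩
  have := hwkX k
  rwa [smul_add, ← add_assoc]

lemma dCone_smul {X : Set (Euc n)} {x : Euc n} {u : Euc n} {c : ℝ} (hc : 0 ≤ c)
    (hu : u ∈ dCone X x) : c • u ∈ dCone X x := by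
  rcases eq_or_lt_of_le hc with hc0 | hc0
  · intro xk tk hX hxk htk htk0
    exact ⟨fun _ => 0, fun k => by simpa using hX k, by simp [← hc0]⟩
  · intro xk tk hX hxk htk htk0
    obtain ⟨uk, hukX, hukl⟩ := hu xk (fun k => c * tk k) hX hxk
      (fun k => mul_pos hc0 (htk k)) (by simpa using htk0.const_mul c)
    refine ⟨fun k => c • uk k, fun k => ?_, hukl.const_smul c⟩
    have := hukX k
    rw [mul_comm, ← smul_smul] at this
    exact this

lemma dCone_convex (X : Set (Euc n)) (x : Euc n) : Convex ℝ (dCone X x) := by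
  intro u hu w hw a b ha hb hab
  exact dCone_add (dCone_smul ha hu) (dCone_smul hb hw)


lemma clarke_subset_dCone {X : Set (Euc n)} {x : Euc n} (hloc : LocCompactSet X)
    (hx : x ∈ X) : clarkeCone X x ⊆ dCone X x := by
  obtain ⟨Cl, U, hCl, hU, hXCU⟩ := hloc
  intro v hv xk tk hXk hxk htk htk0
  -- radius with ball ⊆ U
  obtain ⟨r, hr, hrU⟩ := Metric.isOpen_iff.1 hU x (hXCU ▸ hx).2
  -- distance-to-v infimum over admissible directions at step k
  set S : ℕ → Set ℝ := fun k => (fun u => ‖u - v‖) '' {u | xk k + tk k • u ∈ X} with hS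
  have hSne : ∀ k, (S k).Nonempty := by
    intro k
    exact ⟨‖(0:Euc n) - v‖, 0, by simpa using hXk k, rfl⟩
  have hSbdd : ∀ k, BddBelow (S k) := by
    intro k
    exact ⟨0, fun d ⟨u, _, hu⟩ => hu ▸ norm_nonneg _⟩
  set D : ℕ → ℝ := fun k => sInf (S k) with hD
  have hDnonneg : ∀ k, 0 ≤ D k := fun k =>
    le_csInf (hSne k) (fun d ⟨u, _, hu⟩ => hu ▸ norm_nonneg _)
  -- choose almost-minimizers
  have key : ∀ k, ∃ u : Euc n, xk k + tk k • u ∈ X ∧ ‖u - v‖ < D k + ((k:ℝ)+1)⁻¹ := by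
    intro k
    have : sInf (S k) < D k + ((k:ℝ)+1)⁻¹ := by
      have : (0:ℝ) < ((k:ℝ)+1)⁻¹ := by positivity
      simp only [hD]; linarith
    obtain ⟨d, ⟨u, huX, hud⟩, hdlt⟩ := exists_lt_of_csInf_lt (hSne k) this
    refine ⟨u, huX, ?_⟩
    simpa [← hud] using hdlt
  choose vk hvkX hvkd using key
  refine ⟨vk, hvkX, ?_⟩
  -- D k → 0
  have hDlim : Tendsto D atTop (𝓝 0) := by
    refine Metric.tendsto_atTop.2 (fun ε hε => ?_)
    obtain ⟨δ, hδ, htan⟩ := clarke_approx hx hv (ε/8) (by linarith)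
    set ρ := min δ r with hρdef
    have hρ : 0 < ρ := lt_min hδ hr
    have hballρ : Metric.ball x ρ ⊆ U := fun z hz =>
      hrU (Metric.ball_subset_ball (min_le_right δ r) hz)
    have htan' : ∀ y ∈ X, dist y x < ρ → ∃ w ∈ tanCone X y, ‖w - v‖ ≤ ε/8 := by
      intro y hyX hyd
      exact htan y hyX (lt_of_lt_of_le hyd (min_le_left δ r))
    have ev1 : ∀ᶠ k in atTop, dist (xk k) x < ρ/2 := by
      have := Metric.tendsto_atTop.1 hxk (ρ/2) (by linarith)
      obtain ⟨N, hN⟩ := this; exact eventually_atTop.2 ⟨N, hN⟩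
    have ev2 : ∀ᶠ k in atTop, tk k * (‖v‖ + 2*(ε/8)) < ρ/2 := by
      have hmul : Tendsto (fun k => tk k * (‖v‖ + 2*(ε/8))) atTop (𝓝 0) := by
        simpa using htk0.mul_const (‖v‖ + 2*(ε/8))
      have := Metric.tendsto_atTop.1 hmul (ρ/2) (by linarith)
      obtain ⟨N, hN⟩ := this
      refine eventually_atTop.2 ⟨N, fun k hk => ?_⟩
      have := hN k hk
      rw [Real.dist_eq, sub_zero] at this
      exact lt_of_le_of_lt (le_abs_self _) this
    have ev3 : ∀ᶠ k : ℕ in atTop, ((k:ℝ)+1)⁻¹ < ε/2 := by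
      have := Metric.tendsto_atTop.1 inv_succ_tendsto (ε/2) (by linarith)
      obtain ⟨N, hN⟩ := this
      refine eventually_atTop.2 ⟨N, fun k hk => ?_⟩
      have := hN k hk
      rw [Real.dist_eq, sub_zero] at this
      exact lt_of_le_of_lt (le_abs_self _) this
    obtain ⟨N, hN⟩ := eventually_atTop.1 ((ev1.and ev2).and ev3)
    refine ⟨N, fun k hk => ?_⟩
    obtain ⟨⟨h1, h2⟩, h3⟩ := hN k hk
    obtain ⟨z, hzX, hz⟩ := reach hCl hU hXCU (by linarith : (0:ℝ) < ε/8) hρ hballρ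
      htan' (hXk k) h1 (htk k) h2
    -- u := (z - xk k)/tk k  gives ‖u - v‖ ≤ 2(ε/8) = ε/4
    have htkpos := htk k
    have hu : (tk k)⁻¹ • (z - xk k) ∈ {u | xk k + tk k • u ∈ X} := by
      have : xk k + tk k • ((tk k)⁻¹ • (z - xk k)) = z := by
        rw [smul_smul, mul_inv_cancel₀ htkpos.ne', one_smul]; abel
      simpa [this] using hzX
    have hdist : ‖(tk k)⁻¹ • (z - xk k) - v‖ ≤ ε/4 := by
      have heq : (tk k)⁻¹ • (z - xk k) - v = (tk k)⁻¹ • (z - (xk k + tk k • v)) := by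
        rw [smul_sub, smul_sub]
        rw [smul_add, smul_smul, inv_mul_cancel₀ htkpos.ne', one_smul]
        abel
      rw [heq, norm_smul, Real.norm_eq_abs, abs_of_pos (inv_pos.2 htkpos)]
      calc (tk k)⁻¹ * ‖z - (xk k + tk k • v)‖ ≤ (tk k)⁻¹ * (2*(ε/8)*tk k) :=
            mul_le_mul_of_nonneg_left hz (inv_pos.2 htkpos).le
        _ = ε/4 := by field_simp; ring
    have hDk : D k ≤ ε/4 := le_trans (csInf_le (hSbdd k) ⟨_, hu, rfl⟩) hdist
    rw [Real.dist_eq, sub_zero, abs_of_nonneg (hDnonneg k)]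
    linarith
  -- conclude vk → v
  rw [tendsto_iff_norm_sub_tendsto_zero]
  refine squeeze_zero (fun k => norm_nonneg _) (g := fun k : ℕ => D k + ((k:ℝ)+1)⁻¹)
    (fun k => (hvkd k).le) ?_
  simpa using hDlim.add inv_succ_tendsto


section quad
variable (g : VarMetric n) (x : Euc n)

lemma Bcont : Continuous (fun w : Euc n => g.B x w w) := by
  have h1 : Continuous (fun w : Euc n => ((g.B x w : Euc n →L[ℝ] ℝ), w)) :=
    ((g.B x).continuous).prodMk continuous_id
  exact isBoundedBilinearMap_apply.continuous.comp h1

lemma Bnonneg (v : Euc n) : 0 ≤ g.B x v v := by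
  rcases eq_or_ne v 0 with rfl | hv
  · simp
  · exact (g.posdef x v hv).le

lemma Beq_zero {v : Euc n} (h : g.B x v v ≤ 0) : v = 0 := by
  by_contra hv
  exact absurd h (not_le.2 (g.posdef x v hv))

lemma Bsmul (a b : ℝ) (u w : Euc n) : g.B x (a • u) (b • w) = a * b * g.B x u w := by
  rw [(g.B x).map_smul, ContinuousLinearMap.smul_apply, (g.B x u).map_smul]
  simp only [smul_eq_mul]; ring

lemma Badd (u v w : Euc n) : g.B x (u + v) w = g.B x u w + g.B x v w := by
  rw [(g.B x).map_add, ContinuousLinearMap.add_apply]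

lemma Bsub (u v w : Euc n) : g.B x (u - v) w = g.B x u w - g.B x v w := by
  rw [(g.B x).map_sub, ContinuousLinearMap.sub_apply]

lemma Badd' (u v w : Euc n) : g.B x u (v + w) = g.B x u v + g.B x u w := (g.B x u).map_add _ _

lemma Bsub' (u v w : Euc n) : g.B x u (v - w) = g.B x u v - g.B x u w := (g.B x u).map_sub _ _

lemma Bsmul' (a : ℝ) (u w : Euc n) : g.B x u (a • w) = a * g.B x u w := by
  rw [(g.B x u).map_smul]; rfl

lemma Bsmul_left (a : ℝ) (u w : Euc n) : g.B x (a • u) w = a * g.B x u w := by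
  rw [(g.B x).map_smul, ContinuousLinearMap.smul_apply]; rfl

lemma coercive : ∃ c > (0:ℝ), ∀ w : Euc n, c * ‖w‖^2 ≤ g.B x w w := by
  by_cases hn : n = 0
  · subst hn
    refine ⟨1, one_pos, fun w => ?_⟩
    have hw : w = 0 := by ext i; exact i.elim0
    simp [hw]
  · have hi : Fin n := ⟨0, Nat.pos_of_ne_zero hn⟩
    set S := Metric.sphere (0:Euc n) 1 with hSdef
    have hSne : S.Nonempty := by
      refine ⟨EuclideanSpace.single hi 1, ?_⟩
      simp [hSdef, EuclideanSpace.norm_single]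
    obtain ⟨w₀, hw₀S, hmin⟩ := (isCompact_sphere (0:Euc n) 1).exists_isMinOn hSne
      ((Bcont g x).continuousOn)
    have hw₀norm : ‖w₀‖ = 1 := by simpa [hSdef] using hw₀S
    have hw₀ne : w₀ ≠ 0 := by
      intro h; rw [h, norm_zero] at hw₀norm; exact zero_ne_one hw₀norm
    set m := g.B x w₀ w₀ with hm
    refine ⟨m, g.posdef x w₀ hw₀ne, fun w => ?_⟩
    rcases eq_or_ne w 0 with rfl | hw
    · simp
    · have hnw : (0:ℝ) < ‖w‖ := norm_pos_iff.2 hw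
      set u := ‖w‖⁻¹ • w with hu
      have huS : u ∈ S := by
        simp [hSdef, hu, norm_smul, abs_of_pos (inv_pos.2 hnw), inv_mul_cancel₀ hnw.ne']
      have h1 : m ≤ g.B x u u := hmin huS
      have h2 : g.B x w w = ‖w‖^2 * g.B x u u := by
        have : w = ‖w‖ • u := by
          rw [hu, smul_smul, mul_inv_cancel₀ hnw.ne', one_smul]
        conv_lhs => rw [this, Bsmul]
        ring
      rw [h2]
      have : m * ‖w‖^2 ≤ g.B x u u * ‖w‖^2 := by
        apply mul_le_mul_of_nonneg_right h1; positivity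
      linarith

lemma exists_min (T : Set (Euc n)) (hT : IsClosed T) (h0 : (0:Euc n) ∈ T) (f : Euc n) :
    ∃ v ∈ T, ∀ w ∈ T, g.B x (v - f) (v - f) ≤ g.B x (w - f) (w - f) := by
  obtain ⟨c, hc, hcoer⟩ := coercive g x
  set Q0 := g.B x (0 - f) (0 - f) with hQ0
  have hQ0nn : 0 ≤ Q0 := Bnonneg g x _
  set R := Real.sqrt (Q0 / c) with hR
  set K := T ∩ Metric.closedBall f R with hK
  have hKcomp : IsCompact K := (isCompact_closedBall f R).inter_left hT
  have h0K : (0:Euc n) ∈ K := by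
    refine ⟨h0, ?_⟩
    rw [Metric.mem_closedBall, dist_eq_norm, hR]
    rw [show (‖(0:Euc n) - f‖ ≤ R) = (‖(0:Euc n) - f‖^2 ≤ Q0 / c) from propext (Real.le_sqrt (norm_nonneg _) (by positivity))]
    rw [le_div_iff₀ hc]
    calc ‖(0:Euc n) - f‖^2 * c = c * ‖0 - f‖^2 := by ring
      _ ≤ Q0 := hcoer _
  have hcont : Continuous (fun w : Euc n => g.B x (w - f) (w - f)) :=
    (Bcont g x).comp (continuous_id.sub continuous_const)
  obtain ⟨v, hvK, hvmin⟩ := hKcomp.exists_isMinOn ⟨0, h0K⟩ hcont.continuousOn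
  refine ⟨v, hvK.1, fun w hw => ?_⟩
  by_cases hwK : w ∈ Metric.closedBall f R
  · exact hvmin ⟨hw, hwK⟩
  · have hwR : R < ‖w - f‖ := by
      rw [Metric.mem_closedBall, dist_eq_norm, not_le] at hwK; exact hwK
    have h1 : g.B x (v - f) (v - f) ≤ Q0 := hvmin h0K
    have h2 : Q0 ≤ c * ‖w - f‖^2 := by
      have hRnn : 0 ≤ R := Real.sqrt_nonneg _
      have : R^2 ≤ ‖w - f‖^2 := by
        apply sq_le_sq' <;> nlinarith
      have hRsq : R^2 = Q0 / c := Real.sq_sqrt (by positivity)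
      rw [hRsq] at this
      calc Q0 = c * (Q0 / c) := by field_simp
        _ ≤ c * ‖w - f‖^2 := by
          apply mul_le_mul_of_nonneg_left this hc.le
    exact le_trans h1 (le_trans h2 (hcoer _))

end quad



lemma gnorm_le_iff (g : VarMetric n) (x : Euc n) (a b : Euc n) :
    g.gnorm x a ≤ g.gnorm x b ↔ g.B x a a ≤ g.B x b b := by
  unfold VarMetric.gnorm
  exact Real.sqrt_le_sqrt_iff (Bnonneg g x b)

lemma Bexpand (g : VarMetric n) (x : Euc n) (u w : Euc n) :
    g.B x (u - w) (u - w) = g.B x u u - 2 * g.B x u w + g.B x w w := by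
  rw [Bsub, Bsub', Bsub']
  have := g.symm x u w
  linarith

/-- Part 1. -/
lemma part1 (X : Set (Euc n)) (g : VarMetric n) (f : Euc n → Euc n) (x : Euc n)
    (hx : x ∈ X) : ∀ v ∈ projVF X g f x, g.B x (f x) v = g.B x v v := by
  rintro v ⟨hvT, hvmin⟩
  set a := g.B x v v with ha
  set c := g.B x v (f x) with hc
  have ha0 : 0 ≤ a := Bnonneg g x v
  have hkey : ∀ t : ℝ, 0 ≤ t → a - 2*c ≤ t^2*a - 2*t*c := by
    intro t ht
    have hmem : t • v ∈ tanCone X x := by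
      rcases eq_or_lt_of_le ht with h | h
      · rw [← h, zero_smul]; exact tan_zero_mem hx
      · exact tan_smul_mem h hvT
    have := (gnorm_le_iff g x _ _).1 (hvmin _ hmem)
    rw [Bexpand, Bexpand] at this
    have h1 : g.B x (t • v) (t • v) = t^2 * a := by rw [Bsmul]; ring
    have h2 : g.B x (t • v) (f x) = t * c := by rw [Bsmul_left]
    rw [h1, h2] at this
    linarith
  have hle1 : c ≤ a := by
    refine le_of_forall_pos_le_add (fun ε hε => ?_)
    set s := min 1 (ε/(a+1)) with hs
    have hs0 : 0 < s := lt_min one_pos (by positivity)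
    have := hkey (1+s) (by linarith)
    have hsa : s * a ≤ ε := by
      have h1 : s ≤ ε/(a+1) := min_le_right _ _
      have h2 : 0 < a + 1 := by linarith
      calc s * a ≤ (ε/(a+1)) * a := mul_le_mul_of_nonneg_right h1 ha0
        _ ≤ ε := by rw [div_mul_eq_mul_div, div_le_iff₀ h2]; nlinarith
    nlinarith [sq_nonneg s, mul_nonneg hs0.le ha0]
  have hle2 : a ≤ c := by
    refine le_of_forall_pos_le_add (fun ε hε => ?_)
    set s := min (1/2) (ε/(a+1)) with hs
    have hs0 : 0 < s := lt_min (by norm_num) (by positivity)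
    have hs1 : s ≤ 1/2 := min_le_left _ _
    have := hkey (1-s) (by linarith)
    have hsa : s * a ≤ ε := by
      have h1 : s ≤ ε/(a+1) := min_le_right _ _
      have h2 : 0 < a + 1 := by linarith
      calc s * a ≤ (ε/(a+1)) * a := mul_le_mul_of_nonneg_right h1 ha0
        _ ≤ ε := by rw [div_mul_eq_mul_div, div_le_iff₀ h2]; nlinarith
    nlinarith [sq_nonneg s, mul_nonneg hs0.le ha0]
  have : c = a := le_antisymm hle1 hle2
  rw [g.symm x (f x) v, ← hc, this]

lemma part2 (X : Set (Euc n)) (g : VarMetric n) (f : Euc n → Euc n) (x : Euc n)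
    (hx : x ∈ X) (hloc : LocCompactSet X) (hreg : tanCone X x = clarkeCone X x) :
    ∃ η : Euc n, η ∈ normalCone X g x ∧
      projVF X g f x = {f x - η} ∧
      (∀ η' ∈ normalCone X g x, g.gnorm x (η - f x) ≤ g.gnorm x (η' - f x)) ∧
      (∀ η' ∈ normalCone X g x,
        (∀ η'' ∈ normalCone X g x, g.gnorm x (η' - f x) ≤ g.gnorm x (η'' - f x)) → η' = η) ∧
      f x - η ∈ tanCone X x ∧ g.B x (f x - η) η = 0 := by
  set T := tanCone X x with hT
  have hTD : T = dCone X x :=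
    Subset.antisymm (fun v hv => clarke_subset_dCone hloc hx (hreg ▸ hv)) (dCone_subset_tan hx)
  have hconv : Convex ℝ T := hTD ▸ dCone_convex X x
  have hclosed : IsClosed T := isClosed_tanCone X x
  have h0T : (0:Euc n) ∈ T := tan_zero_mem hx
  obtain ⟨v, hvT, hvmin⟩ := exists_min g x T hclosed h0T (f x)
  -- variational inequality
  have hvar : ∀ w ∈ T, 0 ≤ g.B x (v - f x) (w - v) := by
    intro w hw
    set d := w - v with hd
    have hseg : ∀ θ : ℝ, 0 < θ → θ ≤ 1 → 0 ≤ 2 * g.B x (v - f x) d + θ * g.B x d d := by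
      intro θ hθ0 hθ1
      have hmem : v + θ • d ∈ T := by
        have : v + θ • d = (1-θ) • v + θ • w := by
          rw [hd, smul_sub]
          module
        rw [this]
        exact hconv hvT hw (by linarith) hθ0.le (by ring)
      have hmin := hvmin _ hmem
      have hexp : g.B x (v + θ • d - f x) (v + θ • d - f x) =
          g.B x (v - f x) (v - f x) + 2*θ * g.B x (v - f x) d + θ^2 * g.B x d d := by
        have heq : v + θ • d - f x = (v - f x) + θ • d := by abel
        rw [heq, Badd, Badd', Badd', Bsmul, Bsmul_left, Bsmul', g.symm x d (v - f x)]
        ring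
      rw [hexp] at hmin
      nlinarith [hmin, hθ0]
    by_contra hcon
    push_neg at hcon
    set b := g.B x (v - f x) d with hb
    set q := g.B x d d with hq
    have hq0 : 0 ≤ q := Bnonneg g x d
    set θ := min 1 ((-b)/(q+1)) with hθ
    have hθ0 : 0 < θ := lt_min one_pos (div_pos (by linarith) (by linarith))
    have := hseg θ hθ0 (min_le_left _ _)
    have hθq : θ * q ≤ -b := by
      have h1 : θ ≤ (-b)/(q+1) := min_le_right _ _
      have h2 : 0 < q + 1 := by linarith
      calc θ * q ≤ ((-b)/(q+1)) * q := mul_le_mul_of_nonneg_right h1 hq0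
        _ ≤ -b := by rw [div_mul_eq_mul_div, div_le_iff₀ h2]; nlinarith
    linarith
  have horth : g.B x (v - f x) v = 0 := by
    have h1 := hvar 0 h0T
    have h2 := hvar ((2:ℝ) • v) (tan_smul_mem two_pos hvT)
    rw [zero_sub, g.symm x _ (-v)] at h1
    rw [(g.B x).map_neg, ContinuousLinearMap.neg_apply, g.symm x v _] at h1
    have h2' : (2:ℝ) • v - v = v := by module
    rw [h2'] at h2
    linarith
  have hpos : ∀ w ∈ T, 0 ≤ g.B x (v - f x) w := by
    intro w hw
    have := hvar w hw
    rw [Bsub'] at this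
    linarith
  refine ⟨f x - v, ?_, ?_, ?_, ?_, ?_, ?_⟩
  · -- normal cone membership
    intro w hw
    have hwT : w ∈ T := hreg ▸ hw
    have := hpos w hwT
    have hsymm : g.B x w (f x - v) = g.B x (f x - v) w := g.symm x w _
    rw [hsymm]
    have : g.B x (f x - v) w = - g.B x (v - f x) w := by
      rw [show f x - v = -(v - f x) by abel, (g.B x).map_neg, ContinuousLinearMap.neg_apply]
    linarith [hpos w hwT]
  · -- projVF is the singleton {f x - (f x - v)} = {v}
    have hfv : f x - (f x - v) = v := by abel
    rw [hfv]
    ext u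
    simp only [Set.mem_singleton_iff]
    constructor
    · rintro ⟨huT, humin⟩
      have hQu : g.B x (u - f x) (u - f x) ≤ g.B x (v - f x) (v - f x) :=
        (gnorm_le_iff g x _ _).1 (humin v hvT)
      have hQv : g.B x (v - f x) (v - f x) ≤ g.B x (u - f x) (u - f x) := hvmin u huT
      have hQeq : g.B x (u - f x) (u - f x) = g.B x (v - f x) (v - f x) :=
        le_antisymm hQu hQv
      -- midpoint argument
      have hmid : (1/2 : ℝ) • u + (1/2 : ℝ) • v ∈ T :=
        hconv huT hvT (by norm_num) (by norm_num) (by norm_num)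
      have hQm := hvmin _ hmid
      have hexp : g.B x ((1/2 : ℝ) • u + (1/2 : ℝ) • v - f x) ((1/2 : ℝ) • u + (1/2 : ℝ) • v - f x)
          = g.B x (v - f x) (v - f x) - (1/4) * g.B x (u - v) (u - v) := by
        have heq : (1/2 : ℝ) • u + (1/2 : ℝ) • v - f x
            = (1/2 : ℝ) • (u - f x) + (1/2 : ℝ) • (v - f x) := by module
        have heq2 : u - v = (u - f x) - (v - f x) := by abel
        rw [heq, Badd, Badd', Badd', Bsmul, Bsmul, Bsmul, Bsmul]
        have hs := g.symm x (u - f x) (v - f x)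
        have e3 := Bexpand g x (u - f x) (v - f x)
        rw [← heq2] at e3
        linarith [hQeq, hs, e3]
      rw [hexp] at hQm
      have hQuv : g.B x (u - v) (u - v) ≤ 0 := by linarith
      have := Beq_zero g x hQuv
      have : u - v = 0 := this
      exact sub_eq_zero.1 this
    · rintro rfl
      exact ⟨hvT, fun w hw => Real.sqrt_le_sqrt (hvmin w hw)⟩
  · -- minimality over the normal cone
    intro η' hη'
    rw [gnorm_le_iff]
    have heq : f x - v - f x = -v := by abel
    rw [heq]
    have hQnegv : g.B x (-v) (-v) = g.B x v v := by
      rw [(g.B x).map_neg, ContinuousLinearMap.neg_apply, (g.B x v).map_neg]; ring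
    have heq2 : η' - f x = (η' - (f x - v)) - v := by abel
    rw [hQnegv, heq2, Bexpand]
    have hη'v : g.B x (η' - (f x - v)) v ≤ 0 := by
      rw [Bsub]
      have h1 : g.B x η' v ≤ 0 := by
        have := hη' v (hreg ▸ hvT)
        rw [g.symm x η' v]; exact this
      have h2 : g.B x (f x - v) v = 0 := by
        rw [show f x - v = -(v - f x) by abel, (g.B x).map_neg,
          ContinuousLinearMap.neg_apply, horth]; ring
      linarith
    nlinarith [Bnonneg g x (η' - (f x - v)), hη'v]
  · -- uniqueness of the normal minimizer
    intro η' hη' hη'min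
    have h1 := (gnorm_le_iff g x _ _).1 (hη'min (f x - v) (by
      intro w hw
      have hwT : w ∈ T := hreg ▸ hw
      have hsymm : g.B x w (f x - v) = g.B x (f x - v) w := g.symm x w _
      rw [hsymm, show f x - v = -(v - f x) by abel, (g.B x).map_neg,
        ContinuousLinearMap.neg_apply]
      linarith [hpos w hwT]))
    have heq : f x - v - f x = -v := by abel
    have hQnegv : g.B x (-v) (-v) = g.B x v v := by
      rw [(g.B x).map_neg, ContinuousLinearMap.neg_apply, (g.B x v).map_neg]; ring
    have heq2 : η' - f x = (η' - (f x - v)) - v := by abel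
    rw [heq, hQnegv, heq2, Bexpand] at h1
    have hη'v : g.B x (η' - (f x - v)) v ≤ 0 := by
      rw [Bsub]
      have ha : g.B x η' v ≤ 0 := by
        have := hη' v (hreg ▸ hvT)
        rw [g.symm x η' v]; exact this
      have hb : g.B x (f x - v) v = 0 := by
        rw [show f x - v = -(v - f x) by abel, (g.B x).map_neg,
          ContinuousLinearMap.neg_apply, horth]; ring
      linarith
    have hzero : g.B x (η' - (f x - v)) (η' - (f x - v)) ≤ 0 := by linarith
    have := Beq_zero g x hzero
    exact sub_eq_zero.1 this
  · -- tangency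
    have hfv : f x - (f x - v) = v := by abel
    rw [hfv]; exact hvT
  · -- orthogonality
    have hfv : f x - (f x - v) = v := by abel
    rw [hfv]
    rw [Bsub']
    have h2 : g.B x v (f x) = g.B x (f x) v := g.symm x v (f x)
    have h3 : g.B x (v - f x) v = 0 := horth
    rw [Bsub] at h3
    have h4 : g.B x (f x) v = g.B x v v := by linarith
    rw [show g.B x v (f x) = g.B x (f x) v from g.symm x v (f x), h4]
    ring

/-- Moreau-type decomposition of the projected vector field (Lemma 4.4). -/
theorem stmt_2 {n : ℕ} (X : Set (Euc n)) (g : VarMetric n) (f : Euc n → Euc n)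
    (x : Euc n) (hx : x ∈ X) :
    (∀ v ∈ projVF X g f x, g.B x (f x) v = g.B x v v) ∧
    ((LocCompactSet X ∧ tanCone X x = clarkeCone X x) →
      ∃ η : Euc n, η ∈ normalCone X g x ∧
        projVF X g f x = {f x - η} ∧
        (∀ η' ∈ normalCone X g x, g.gnorm x (η - f x) ≤ g.gnorm x (η' - f x)) ∧
        (∀ η' ∈ normalCone X g x,
          (∀ η'' ∈ normalCone X g x, g.gnorm x (η' - f x) ≤ g.gnorm x (η'' - f x)) → η' = η) ∧
        f x - η ∈ tanCone X x ∧ g.B x (f x - η) η = 0) := by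
  refine ⟨part1 X g f x hx, ?_⟩
  rintro ⟨hloc, hreg⟩
  exact part2 X g f x hx hloc hreg
end

section
/- Let X ⊆ ℝ^n be locally compact, let g be a continuous metric on X, let f : X → ℝ^n be a continuous vector field, and let x ∈ X. Then every v ∈ K[Π^g_X f](x) satisfies ⟨f(x), v⟩_{g(x)} ≥ ‖v‖²_{g(x)}. If moreover X is Clarke regular, then for every v ∈ K[Π^g_X f](x) the vector η̂ := f(x) − v satisfies η̂ ∈ N^g_x X. -/
open MeasureTheory Filter Topology Set
open scoped RealInnerProductSpace

variable {n : ℕ}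

section Aux
variable {n : ℕ}

lemma B_nonneg (g : VarMetric n) (x v : Euc n) : 0 ≤ g.B x v v := by
  rcases eq_or_ne v 0 with h | h
  · simp [h]
  · exact (g.posdef x v h).le

lemma B_expand (g : VarMetric n) (y u w : Euc n) :
    g.B y (u - w) (u - w) = g.B y u u - 2 * g.B y u w + g.B y w w := by
  have hs := g.symm y u w
  simp only [map_sub, ContinuousLinearMap.sub_apply]
  linarith

lemma two_B_le (g : VarMetric n) (y u w : Euc n) :
    2 * g.B y u w ≤ g.B y u u + g.B y w w := by
  have := B_nonneg g y (u - w)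
  rw [B_expand] at this
  linarith

lemma tendsto_sub_of_scaled {z y : ℕ → Euc n} {t : ℕ → ℝ} {v : Euc n}
    (ht : ∀ k, 0 < t k) (ht0 : Filter.Tendsto t Filter.atTop (nhds 0))
    (h : Filter.Tendsto (fun k => (t k)⁻¹ • (z k - y k)) Filter.atTop (nhds v)) :
    Filter.Tendsto (fun k => z k - y k) Filter.atTop (nhds 0) := by
  simpa using (ht0.smul h).congr (fun k => by rw [smul_inv_smul₀ (ht k).ne'])

lemma tanCone_smul_mem {X : Set (Euc n)} {y w : Euc n} (hw : w ∈ tanCone X y)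
    {c : ℝ} (hc : 0 < c) : c • w ∈ tanCone X y := by
  obtain ⟨xk, δ, hmem, hxk, hδ, hδ0, hlim⟩ := hw
  refine ⟨xk, fun k => δ k / c, hmem, hxk, fun k => div_pos (hδ k) hc, ?_, ?_⟩
  · simpa using hδ0.div_const c
  · have : (fun k => (δ k / c)⁻¹ • (xk k - y)) =
        fun k => c • ((δ k)⁻¹ • (xk k - y)) := by
      funext k
      rw [smul_smul, inv_div, div_eq_mul_inv]
    rw [this]
    exact hlim.const_smul c

lemma tanCone_zero_mem {X : Set (Euc n)} {y : Euc n} (hy : y ∈ X) :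
    (0 : Euc n) ∈ tanCone X y := by
  refine ⟨fun _ => y, fun k => 1 / (k + 1), fun _ => hy, tendsto_const_nhds,
    fun k => by positivity, tendsto_one_div_add_atTop_nhds_zero_nat, ?_⟩
  simpa using tendsto_const_nhds

end Aux
section Aux2
variable {n : ℕ}

/-- The "uniform" (derivable) Clarke cone characterization. -/
def DCone (X : Set (Euc n)) (x : Euc n) : Set (Euc n) :=
  {v | ∀ (y : ℕ → Euc n) (t : ℕ → ℝ), (∀ k, y k ∈ X) → Tendsto y atTop (𝓝 x) →
    (∀ k, 0 < t k) → Tendsto t atTop (𝓝 0) →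
    ∃ z : ℕ → Euc n, (∀ k, z k ∈ X) ∧
      Tendsto (fun k => (t k)⁻¹ • (z k - y k)) atTop (𝓝 v)}

lemma DCone_add {X : Set (Euc n)} {x u v : Euc n}
    (hu : u ∈ DCone X x) (hv : v ∈ DCone X x) : u + v ∈ DCone X x := by
  intro y t hy hyx ht ht0
  obtain ⟨z, hz, hzl⟩ := hu y t hy hyx ht ht0
  have hzx : Tendsto z atTop (𝓝 x) := by
    have h0 := tendsto_sub_of_scaled ht ht0 hzl
    have := h0.add hyx
    simpa using this
  obtain ⟨z', hz', hzl'⟩ := hv z t hz hzx ht ht0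
  refine ⟨z', hz', ?_⟩
  have : (fun k => (t k)⁻¹ • (z' k - y k)) =
      fun k => (t k)⁻¹ • (z' k - z k) + (t k)⁻¹ • (z k - y k) := by
    funext k; rw [← smul_add, sub_add_sub_cancel]
  rw [this, show u + v = v + u from add_comm u v]
  exact hzl'.add hzl

lemma DCone_smul {X : Set (Euc n)} {x v : Euc n} {c : ℝ}
    (hc : 0 ≤ c) (hv : v ∈ DCone X x) : c • v ∈ DCone X x := by
  rcases hc.lt_or_eq with hc | hc
  · intro y t hy hyx ht ht0
    obtain ⟨z, hz, hzl⟩ := hv y (fun k => c * t k) hy hyx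
      (fun k => mul_pos hc (ht k)) (by simpa using ht0.const_mul c)
    refine ⟨z, hz, ?_⟩
    have : (fun k => (t k)⁻¹ • (z k - y k)) =
        fun k => c • ((c * t k)⁻¹ • (z k - y k)) := by
      funext k
      rw [smul_smul, mul_inv, ← mul_assoc, mul_inv_cancel₀ hc.ne', one_mul]
    rw [this]
    exact hzl.const_smul c
  · intro y t hy hyx ht ht0
    exact ⟨y, hy, by simpa [← hc] using tendsto_const_nhds⟩

lemma DCone_subset_tanCone {X : Set (Euc n)} {x : Euc n} (hx : x ∈ X) :
    DCone X x ⊆ tanCone X x := by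
  intro v hv
  obtain ⟨z, hz, hzl⟩ := hv (fun _ => x) (fun k => 1 / (k + 1)) (fun _ => hx)
    tendsto_const_nhds (fun k => by positivity) tendsto_one_div_add_atTop_nhds_zero_nat
  refine ⟨z, fun k => 1 / (k + 1), hz, ?_, fun k => by positivity,
    tendsto_one_div_add_atTop_nhds_zero_nat, hzl⟩
  have h0 := tendsto_sub_of_scaled (t := fun k : ℕ => 1 / (k+1))
    (fun k => by positivity) tendsto_one_div_add_atTop_nhds_zero_nat hzl
  have := h0.add (tendsto_const_nhds (f := atTop (α := ℕ)) (x := x))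
  simpa using this

end Aux2
section Aux3
open Metric
variable {n : ℕ}

lemma S1 {X : Set (Euc n)} {x v : Euc n} (hv : v ∈ clarkeCone X x) :
    ∀ ε > (0:ℝ), ∃ δ₀ > (0:ℝ), ∀ z ∈ X, dist z x < δ₀ →
      ∃ w ∈ tanCone X z, ‖w - v‖ < ε := by
  by_contra hcon
  push_neg at hcon
  obtain ⟨ε, hε, hbad⟩ := hcon
  have hch : ∀ k : ℕ, ∃ z, z ∈ X ∧ dist z x < 1 / (k + 1) ∧
      ∀ w ∈ tanCone X z, ε ≤ ‖w - v‖ := by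
    intro k
    obtain ⟨z, hz1, hz2, hz3⟩ := hbad (1 / (k + 1)) (by positivity)
    exact ⟨z, hz1, hz2, fun w hw => (hz3 w hw)⟩
  choose z hzX hzd hzb using hch
  have hzx : Tendsto z atTop (𝓝 x) := by
    rw [tendsto_iff_dist_tendsto_zero]
    exact squeeze_zero (fun k => dist_nonneg) (fun k => (hzd k).le)
      tendsto_one_div_add_atTop_nhds_zero_nat
  obtain ⟨vk, hvk, hvkl⟩ := hv z hzX hzx
  obtain ⟨N, hN⟩ := (Metric.tendsto_atTop.mp hvkl) ε hε
  have := hzb N (vk N) (hvk N)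
  have h2 := hN N le_rfl
  rw [dist_eq_norm] at h2
  exact absurd h2 (not_lt.mpr this)

lemma S2 {X C : Set (Euc n)} (hXC : X ⊆ C) {z w : Euc n} (hw : w ∈ tanCone X z) :
    ∀ ε > (0:ℝ), ∀ s₀ > (0:ℝ), ∃ s : ℝ, 0 < s ∧ s ≤ s₀ ∧
      infDist (z + s • w) C ≤ ε * s := by
  intro ε hε s₀ hs₀
  obtain ⟨xk, δ, hmem, hxk, hδ, hδ0, hlim⟩ := hw
  have h1 : ∀ᶠ k in atTop, |δ k| < s₀ := by
    have := (Metric.tendsto_nhds.mp hδ0) s₀ hs₀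
    simpa [Real.dist_eq] using this
  have h2 : ∀ᶠ k in atTop, dist ((δ k)⁻¹ • (xk k - z)) w < ε :=
    (Metric.tendsto_nhds.mp hlim) ε hε
  obtain ⟨k, hk1, hk2⟩ := (h1.and h2).exists
  refine ⟨δ k, hδ k, (le_abs_self _).trans hk1.le, ?_⟩
  have hle : infDist (z + δ k • w) C ≤ dist (z + δ k • w) (xk k) :=
    infDist_le_dist_of_mem (hXC (hmem k))
  refine hle.trans ?_
  have heq : z + δ k • w - xk k = δ k • (w - (δ k)⁻¹ • (xk k - z)) := by
    rw [smul_sub, smul_inv_smul₀ (hδ k).ne']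
    abel
  rw [dist_eq_norm, heq, norm_smul, Real.norm_eq_abs, abs_of_pos (hδ k)]
  rw [dist_eq_norm] at hk2
  calc δ k * ‖w - (δ k)⁻¹ • (xk k - z)‖ ≤ δ k * ε := by
        apply mul_le_mul_of_nonneg_left _ (hδ k).le
        rw [← norm_neg]; simpa using hk2.le
    _ = ε * δ k := mul_comm _ _

end Aux3
section Aux4
open Metric
variable {n : ℕ}

set_option maxHeartbeats 1000000 in
lemma clarke_subset_DCone {X : Set (Euc n)} (hX : LocCompactSet X) {x : Euc n}
    (hx : x ∈ X) : clarkeCone X x ⊆ DCone X x := by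
  obtain ⟨C, U, hC, hU, hXCU⟩ := hX
  have hxC : x ∈ C := (hXCU ▸ hx).1
  have hxU : x ∈ U := (hXCU ▸ hx).2
  obtain ⟨r, hr, hball⟩ := Metric.isOpen_iff.mp hU x hxU
  have hsub : ∀ p, p ∈ C → dist p x < r → p ∈ X := fun p h1 h2 =>
    hXCU ▸ ⟨h1, hball h2⟩
  have hXC : X ⊆ C := fun p hp => (hXCU ▸ hp).1
  intro v hv
  -- Lemma A
  have LemA : ∀ ε > (0:ℝ), ∃ δ > (0:ℝ), ∀ y' ∈ X, dist y' x < δ →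
      ∀ s : ℝ, 0 < s → s ≤ δ → infDist (y' + s • v) C ≤ ε * s := by
    intro ε hε
    obtain ⟨δ₀, hδ₀, hS1⟩ := S1 hv (ε/2) (by positivity)
    set M := 1 + ‖v‖ + ε with hM
    have hM0 : (0:ℝ) < M := by positivity
    have hmin : (0:ℝ) < min δ₀ r := lt_min hδ₀ hr
    refine ⟨min δ₀ r / (2 * M), by positivity, ?_⟩
    intro y' hy'X hy'd s hs hsδ
    set δ := min δ₀ r / (2 * M) with hδdef
    set hfun : ℝ → ℝ := fun a => infDist (y' + a • v) C with hhf
    have hcont : Continuous hfun :=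
      (continuous_infDist_pt C).comp (continuous_const.add (continuous_id.smul continuous_const))
    set G := {a : ℝ | a ∈ Set.Icc 0 s ∧ hfun a ≤ ε * a} with hGdef
    have hG0 : (0:ℝ) ∈ G := by
      refine ⟨⟨le_rfl, hs.le⟩, ?_⟩
      have : hfun 0 = 0 := by
        simp only [hhf, zero_smul, add_zero]
        exact infDist_zero_of_mem (hXC hy'X)
      simp [this]
    have hGbdd : BddAbove G := BddAbove.mono (fun a ha => ha.1) bddAbove_Icc
    have hGcl : IsClosed G := by
      have : G = Set.Icc 0 s ∩ {a | hfun a ≤ ε * a} := rfl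
      rw [this]
      exact isClosed_Icc.inter (isClosed_le hcont (continuous_const.mul continuous_id))
    set T := sSup G with hTdef
    have hTG : T ∈ G := hGcl.csSup_mem ⟨0, hG0⟩ hGbdd
    rcases eq_or_lt_of_le hTG.1.2 with he | hlt
    · exact he ▸ hTG.2
    · exfalso
      set p := y' + T • v with hpdef
      obtain ⟨zp, hzpC, hzpd⟩ := hC.exists_infDist_eq_dist ⟨x, hxC⟩ p
      have hT0 : 0 ≤ T := hTG.1.1
      have hTδ : T ≤ δ := hTG.1.2.trans hsδ
      have hdpy : dist p y' = T * ‖v‖ := by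
        simp [hpdef, dist_eq_norm, norm_smul, abs_of_nonneg hT0]
      have hdzp : dist p zp ≤ ε * T := hzpd ▸ hTG.2
      have hδle : δ * M = min δ₀ r / 2 := by
        rw [hδdef, div_mul_eq_mul_div, div_eq_div_iff (by positivity) (by norm_num)]
        ring
      have hzx : dist zp x < min δ₀ r := by
        have h4 : dist zp x ≤ dist zp p + dist p y' + dist y' x := dist_triangle4 zp p y' x
        have h5 : dist zp p ≤ ε * T := by rw [dist_comm]; exact hdzp
        have h6 : ε * T ≤ ε * δ := by nlinarith
        have h7 : T * ‖v‖ ≤ δ * ‖v‖ := by nlinarith [norm_nonneg v]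
        have h8 : dist zp x ≤ ε * δ + δ * ‖v‖ + δ := by
          rw [hdpy] at h4; linarith
        have : ε * δ + δ * ‖v‖ + δ = δ * M := by rw [hM]; ring
        rw [this, hδle] at h8
        linarith
      have hzpX : zp ∈ X := hsub zp hzpC (hzx.trans_le (min_le_right _ _))
      obtain ⟨w, hw, hwv⟩ := hS1 zp hzpX (hzx.trans_le (min_le_left _ _))
      obtain ⟨s', hs'0, hs'le, hs'inf⟩ := S2 hXC hw (ε/2) (by positivity)
        (s - T) (sub_pos.mpr hlt)
      have hkey : hfun (T + s') ≤ ε * (T + s') := by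
        have h1 : infDist (y' + (T + s') • v) C ≤
            infDist (zp + s' • w) C + dist (y' + (T + s') • v) (zp + s' • w) :=
          infDist_le_infDist_add_dist
        have heq : y' + (T + s') • v = p + s' • v := by
          rw [hpdef, add_smul]; abel
        have h2 : dist (y' + (T + s') • v) (zp + s' • w) ≤ dist p zp + s' * dist v w := by
          rw [heq]
          calc dist (p + s' • v) (zp + s' • w) ≤
              dist (p + s' • v) (zp + s' • v) + dist (zp + s' • v) (zp + s' • w) :=
                dist_triangle _ _ _
            _ = dist p zp + s' * dist v w := by
                rw [dist_add_right, dist_add_left, dist_smul₀, Real.norm_eq_abs,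
                  abs_of_pos hs'0]
        have h3 : dist v w ≤ ε / 2 := by
          rw [dist_eq_norm, norm_sub_rev]; exact hwv.le
        have h4 : s' * dist v w ≤ s' * (ε/2) := by nlinarith
        calc hfun (T + s') ≤ infDist (zp + s' • w) C + (dist p zp + s' * dist v w) := by
              exact h1.trans (by linarith)
          _ ≤ ε/2 * s' + (ε * T + s' * (ε/2)) := by linarith

          _ = ε * (T + s') := by ring
      have hmem : T + s' ∈ G := ⟨⟨by linarith, by linarith⟩, hkey⟩
      have := le_csSup hGbdd hmem
      linarith
  -- final assembly
  intro y t hyX hyx ht ht0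
  have hnear : ∀ k, ∃ zp ∈ C, infDist (y k + t k • v) C = dist (y k + t k • v) zp :=
    fun k => hC.exists_infDist_eq_dist ⟨x, hxC⟩ _
  choose np hnpC hnpd using hnear
  set z := fun k => if dist (np k) x < r then np k else y k with hzdef
  refine ⟨z, fun k => ?_, ?_⟩
  · by_cases h : dist (np k) x < r
    · simp only [hzdef, if_pos h]
      exact hsub _ (hnpC k) h
    · simp only [hzdef, if_neg h]
      exact hyX k
  · rw [Metric.tendsto_nhds]
    intro ε hε
    obtain ⟨δ, hδ, hA⟩ := LemA (ε/2) (by positivity)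
    obtain ⟨M', hM'⟩ : ∃ M' : ℝ, M' = 1 + ‖v‖ + ε := ⟨_, rfl⟩
    have hM'0 : (0:ℝ) < M' := by rw [hM']; positivity
    have E1 : ∀ᶠ k in atTop, dist (y k) x < min δ (r/4) :=
      (Metric.tendsto_nhds.mp hyx) _ (lt_min hδ (by positivity))
    have E2 : ∀ᶠ k in atTop, |t k| < min δ (r / (4 * M')) := by
      have h := (Metric.tendsto_nhds.mp ht0) (min δ (r / (4 * M')))
        (lt_min hδ (div_pos hr (by positivity)))
      exact h.mono (fun k hk => by rwa [Real.dist_eq, sub_zero] at hk)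
    filter_upwards [E1, E2] with k h1 h2
    have htk := ht k
    have htkδ : t k ≤ δ := ((le_abs_self _).trans h2.le).trans (min_le_left _ _)
    have htkr : t k < r / (4 * M') := (le_abs_self _).trans_lt (h2.trans_le (min_le_right _ _))
    have hinf : infDist (y k + t k • v) C ≤ ε/2 * t k :=
      hA (y k) (hyX k) (h1.trans_le (min_le_left _ _)) (t k) htk htkδ
    have hnpx : dist (np k) x < r := by
      have h4 : dist (np k) x ≤ dist (np k) (y k + t k • v) + dist (y k + t k • v) (y k)
          + dist (y k) x := dist_triangle4 _ _ _ _
      have h5 : dist (np k) (y k + t k • v) ≤ ε/2 * t k := by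
        rw [dist_comm, ← hnpd k]; exact hinf
      have h6 : dist (y k + t k • v) (y k) = t k * ‖v‖ := by
        simp [dist_eq_norm, norm_smul, abs_of_pos htk]
      have h7 : ε/2 * t k + t k * ‖v‖ ≤ t k * M' := by
        have he : t k * M' - (ε/2 * t k + t k * ‖v‖) = t k * (1 + ε/2) := by
          rw [hM']; ring
        have h0 : 0 ≤ t k * (1 + ε/2) := by positivity
        linarith
      have h8 : t k * M' < r / 4 := by
        have hq : r / (4 * M') * M' = r / 4 := by field_simp
        have := mul_lt_mul_of_pos_right htkr hM'0
        rwa [hq] at this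
      have h9 : dist (y k) x < r / 4 := h1.trans_le (min_le_right _ _)
      linarith
    have hzk : z k = np k := by
      simp only [hzdef]
      rw [if_pos hnpx]
    rw [hzk]
    have halg : (t k)⁻¹ • (np k - y k) - v = (t k)⁻¹ • (np k - (y k + t k • v)) := by
      rw [smul_sub, smul_sub, smul_add, inv_smul_smul₀ htk.ne']
      abel
    rw [dist_eq_norm, halg, norm_smul, Real.norm_eq_abs, abs_of_pos (inv_pos.mpr htk)]
    have h10 : ‖np k - (y k + t k • v)‖ = infDist (y k + t k • v) C := by
      rw [← dist_eq_norm, dist_comm, ← hnpd k]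
    rw [h10]
    calc (t k)⁻¹ * infDist (y k + t k • v) C ≤ (t k)⁻¹ * (ε/2 * t k) := by
          apply mul_le_mul_of_nonneg_left hinf (inv_pos.mpr htk).le
      _ = ε/2 := by field_simp
      _ < ε := by linarith

end Aux4
section Aux5
variable {n : ℕ}

lemma eq_zero_of_forall_abs_le {d c : ℝ} (hc : 0 ≤ c)
    (h : ∀ s : ℝ, 0 < s → s ≤ 1 → |d| ≤ s * c / 2) : d = 0 := by
  by_contra hd
  have hd0 : 0 < |d| := abs_pos.mpr hd
  have hs0 : 0 < min 1 (|d| / (c + 1)) := lt_min one_pos (by positivity)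
  have h2 := h _ hs0 (min_le_left _ _)
  have h3 : min 1 (|d| / (c + 1)) ≤ |d| / (c + 1) := min_le_right _ _
  have h4 : min 1 (|d| / (c + 1)) * c ≤ |d| / (c + 1) * c :=
    mul_le_mul_of_nonneg_right h3 hc
  have h5 : |d| / (c + 1) * c < |d| := by
    rw [div_mul_eq_mul_div, div_lt_iff₀ (by positivity)]
    nlinarith
  linarith

lemma nonneg_of_forall_le {a c : ℝ} (hc : 0 ≤ c)
    (h : ∀ s : ℝ, 0 < s → s ≤ 1 → -(s * c / 2) ≤ a) : 0 ≤ a := by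
  by_contra ha
  push_neg at ha
  have := eq_zero_of_forall_abs_le hc (d := a) (fun s hs hs1 => by
    rw [abs_of_neg ha]
    have := h s hs hs1
    linarith)
  linarith

lemma gnorm_sq (g : VarMetric n) (y u : Euc n) : (g.gnorm y u) ^ 2 = g.B y u u :=
  Real.sq_sqrt (B_nonneg g y u)

lemma B_le_of_gnorm_le {g : VarMetric n} {y a b : Euc n}
    (h : g.gnorm y a ≤ g.gnorm y b) : g.B y a a ≤ g.B y b b := by
  rw [← gnorm_sq, ← gnorm_sq]
  exact pow_le_pow_left₀ (Real.sqrt_nonneg _) h 2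

lemma B_add_expand (g : VarMetric n) (y a b : Euc n) :
    g.B y (a + b) (a + b) = g.B y a a + 2 * g.B y a b + g.B y b b := by
  have hs := g.symm y a b
  simp only [map_add, ContinuousLinearMap.add_apply]
  linarith

lemma B_smul_right (g : VarMetric n) (y a b : Euc n) (c : ℝ) :
    g.B y a (c • b) = c * g.B y a b := by
  rw [_root_.map_smul]; rfl

lemma B_smul_left (g : VarMetric n) (y a b : Euc n) (c : ℝ) :
    g.B y (c • a) b = c * g.B y a b := by
  rw [_root_.map_smul]; rfl

lemma proj_min {X : Set (Euc n)} {g : VarMetric n} {f : Euc n → Euc n} {y w : Euc n}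
    (hw : w ∈ projVF X g f y) :
    ∀ w' ∈ tanCone X y, g.B y (w - f y) (w - f y) ≤ g.B y (w' - f y) (w' - f y) :=
  fun w' h' => B_le_of_gnorm_le (hw.2 w' h')

/-- scaling optimality: `⟨w, w⟩ = ⟨w, f y⟩` for a projection `w`. -/
lemma proj_eq {X : Set (Euc n)} {g : VarMetric n} {f : Euc n → Euc n} {y w : Euc n}
    (hy : y ∈ X) (hw : w ∈ projVF X g f y) :
    g.B y w w = g.B y w (f y) := by
  set A := g.B y w w with hA
  set Bf := g.B y w (f y) with hBf
  have hA0 : 0 ≤ A := B_nonneg g y w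
  have key : ∀ s : ℝ, 0 < s → s ≤ 1 → |A - Bf| ≤ s * A / 2 := by
    intro s hs hs1
    have hexp : ∀ c : ℝ, g.B y (c • w - f y) (c • w - f y)
        = c^2 * A - 2 * (c * Bf) + g.B y (f y) (f y) := by
      intro c
      rw [B_expand]
      rw [show g.B y (c • w) (c • w) = c * (c * A) from by rw [B_smul_left, B_smul_right]]
      rw [B_smul_left g y w (f y) c]
      ring
    have h1 := proj_min hw ((1 + s) • w) (tanCone_smul_mem hw.1 (by linarith))
    have h2 : (1 - s) • w ∈ tanCone X y := by
      rcases lt_or_eq_of_le hs1 with h | h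
      · exact tanCone_smul_mem hw.1 (by linarith)
      · rw [← h]; simpa using tanCone_zero_mem hy
    have h2' := proj_min hw _ h2
    rw [hexp] at h1
    rw [hexp] at h2'
    have hw1 : g.B y (w - f y) (w - f y) = 1^2 * A - 2 * (1 * Bf) + g.B y (f y) (f y) := by
      have := hexp 1
      simpa using this
    rw [hw1] at h1 h2'
    rw [abs_le]
    constructor
    · nlinarith
    · nlinarith
  have := eq_zero_of_forall_abs_le hA0 key
  linarith [abs_nonneg (A - Bf), this, sub_eq_zero.mp this]

/-- first-order optimality against a direction reachable by convex combination. -/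
lemma proj_opt {X : Set (Euc n)} {g : VarMetric n} {f : Euc n → Euc n} {y w u : Euc n}
    (hy : y ∈ X) (hw : w ∈ projVF X g f y)
    (hcombo : ∀ s : ℝ, 0 < s → s ≤ 1 → w + s • (u - w) ∈ tanCone X y) :
    g.B y u (f y - w) ≤ 0 := by
  set d := u - w with hd
  have hkey : ∀ s : ℝ, 0 < s → s ≤ 1 →
      -(s * g.B y d d / 2) ≤ g.B y (w - f y) d := by
    intro s hs hs1
    have h1 := proj_min hw _ (hcombo s hs hs1)
    have heq : w + s • d - f y = (w - f y) + s • d := by abel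
    rw [heq, B_add_expand] at h1
    have h2 : g.B y (w - f y) (s • d) = s * g.B y (w - f y) d := B_smul_right g y _ _ _
    have h3 : g.B y (s • d) (s • d) = s * (s * g.B y d d) := by
      rw [B_smul_left, B_smul_right]
    rw [h2, h3] at h1
    have h4 : 0 ≤ 2 * (s * g.B y (w - f y) d) + s * (s * g.B y d d) := by linarith
    have h5 : -(s * (s * g.B y d d)) ≤ 2 * (s * g.B y (w - f y) d) := by linarith
    have h6 : (-(s * g.B y d d / 2)) * s ≤ g.B y (w - f y) d * s := by ring_nf; ring_nf at h5; linarith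
    exact le_of_mul_le_mul_right h6 hs
  have hpos := nonneg_of_forall_le (B_nonneg g y d) hkey
  -- B y (w - f y) d ≥ 0
  have he := proj_eq hy hw
  have hsym1 := g.symm y w (f y)
  have hsym2 := g.symm y w u
  have hsym3 := g.symm y (f y) u
  have hexp : g.B y (w - f y) d = g.B y w u - g.B y w w - g.B y (f y) u + g.B y (f y) w := by
    simp only [hd, map_sub, ContinuousLinearMap.sub_apply]
    ring
  have hgoal : g.B y u (f y - w) = g.B y (f y) u - g.B y w u := by
    simp only [map_sub, ContinuousLinearMap.sub_apply]
    linarith [g.symm y u (f y), g.symm y u w]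
  rw [hgoal]
  rw [hexp] at hpos
  linarith

end Aux5
section Aux6
variable {n : ℕ}

lemma tendsto_B {X : Set (Euc n)} (g : VarMetric n) (hg : ContinuousOn g.B X)
    {xk : ℕ → Euc n} {x : Euc n} (hmem : ∀ k, xk k ∈ X) (hx : x ∈ X)
    (hxk : Tendsto xk atTop (𝓝 x)) {ak bk : ℕ → Euc n} {a b : Euc n}
    (ha : Tendsto ak atTop (𝓝 a)) (hb : Tendsto bk atTop (𝓝 b)) :
    Tendsto (fun k => g.B (xk k) (ak k) (bk k)) atTop (𝓝 (g.B x a b)) := by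
  have h1 : Tendsto (fun k => g.B (xk k)) atTop (𝓝 (g.B x)) :=
    (hg x hx).tendsto.comp (tendsto_nhdsWithin_iff.mpr ⟨hxk, Eventually.of_forall hmem⟩)
  have h2 : Tendsto (fun k => g.B (xk k) (ak k)) atTop (𝓝 (g.B x a)) :=
    (isBoundedBilinearMap_apply.continuous.tendsto (g.B x, a)).comp (h1.prodMk_nhds ha)
  exact (isBoundedBilinearMap_apply.continuous.tendsto (g.B x a, b)).comp (h2.prodMk_nhds hb)

lemma tendsto_f {X : Set (Euc n)} {f : Euc n → Euc n} (hf : ContinuousOn f X)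
    {xk : ℕ → Euc n} {x : Euc n} (hmem : ∀ k, xk k ∈ X) (hx : x ∈ X)
    (hxk : Tendsto xk atTop (𝓝 x)) :
    Tendsto (fun k => f (xk k)) atTop (𝓝 (f x)) :=
  (hf x hx).tendsto.comp (tendsto_nhdsWithin_iff.mpr ⟨hxk, Eventually.of_forall hmem⟩)

end Aux6

/-- properties of the Krasovskii regularization (Lemma 4.5). -/
theorem stmt_3 {n : ℕ} (X : Set (Euc n)) (g : VarMetric n) (f : Euc n → Euc n)
    (hX : LocCompactSet X) (hg : ContinuousOn g.B X) (hf : ContinuousOn f X)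
    (x : Euc n) (hx : x ∈ X) :
    (∀ v ∈ kras X (projVF X g f) x, (g.gnorm x v) ^ 2 ≤ g.B x (f x) v) ∧
    (ClarkeRegular X → ∀ v ∈ kras X (projVF X g f) x, f x - v ∈ normalCone X g x) := by
  set S := {v : Euc n | ∃ (xk : ℕ → Euc n) (vk : ℕ → Euc n),
    (∀ k, xk k ∈ X) ∧ Tendsto xk atTop (𝓝 x) ∧
    (∀ k, vk k ∈ projVF X g f (xk k)) ∧ Tendsto vk atTop (𝓝 v)} with hSdef
  have hkras : kras X (projVF X g f) x = closure (convexHull ℝ S) := rfl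
  constructor
  · -- Part 1
    intro v hv
    rw [gnorm_sq]
    set T1 := {p : Euc n | g.B x p p ≤ g.B x (f x) p} with hT1def
    have hclosed : IsClosed T1 := by
      have c1 : Continuous fun p : Euc n => g.B x p p :=
        isBoundedBilinearMap_apply.continuous.comp ((g.B x).continuous.prodMk continuous_id)
      exact isClosed_le c1 (g.B x (f x)).continuous
    have hconv : Convex ℝ T1 := by
      intro a ha b hb s t hs ht hst
      have ha' : g.B x a a ≤ g.B x (f x) a := ha
      have hb' : g.B x b b ≤ g.B x (f x) b := hb
      show g.B x (s • a + t • b) (s • a + t • b) ≤ g.B x (f x) (s • a + t • b)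
      have e1 : g.B x (s • a + t • b) (s • a + t • b) =
          s * (s * g.B x a a) + 2 * (s * (t * g.B x a b)) + t * (t * g.B x b b) := by
        rw [B_add_expand]
        simp only [B_smul_left, B_smul_right]
        ring
      have e2 : g.B x (f x) (s • a + t • b) = s * g.B x (f x) a + t * g.B x (f x) b := by
        rw [map_add, B_smul_right, B_smul_right]
      rw [e1, e2]
      have h1 : s * g.B x a a ≤ s * g.B x (f x) a := mul_le_mul_of_nonneg_left ha' hs
      have h2 : t * g.B x b b ≤ t * g.B x (f x) b := mul_le_mul_of_nonneg_left hb' ht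
      have h3 : 0 ≤ s * t * (g.B x a a + g.B x b b - 2 * g.B x a b) :=
        mul_nonneg (mul_nonneg hs ht) (by linarith [two_B_le g x a b])
      have hid : s * (s * g.B x a a) + 2 * (s * (t * g.B x a b)) + t * (t * g.B x b b)
          = s * g.B x a a + t * g.B x b b
            - s * t * (g.B x a a + g.B x b b - 2 * g.B x a b)
            + (s + t - 1) * (s * g.B x a a + t * g.B x b b) := by ring
      rw [hst] at hid
      simp only [sub_self, one_mul] at hid
      nlinarith [h1, h2, h3, hid]
    have hgen : S ⊆ T1 := by
      rintro p ⟨xk, vk, hxkX, hxkx, hvk, hvkl⟩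
      have heach : ∀ k, g.B (xk k) (vk k) (vk k) = g.B (xk k) (vk k) (f (xk k)) :=
        fun k => proj_eq (hxkX k) (hvk k)
      have hL : Tendsto (fun k => g.B (xk k) (vk k) (vk k)) atTop (𝓝 (g.B x p p)) :=
        tendsto_B g hg hxkX hx hxkx hvkl hvkl
      have hR : Tendsto (fun k => g.B (xk k) (vk k) (f (xk k))) atTop (𝓝 (g.B x p (f x))) :=
        tendsto_B g hg hxkX hx hxkx hvkl (tendsto_f hf hxkX hx hxkx)
      have heq : g.B x p p = g.B x p (f x) :=
        tendsto_nhds_unique (hL.congr (fun k => heach k)) hR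
      show g.B x p p ≤ g.B x (f x) p
      rw [heq, g.symm x p (f x)]
    have hsub : kras X (projVF X g f) x ⊆ T1 := by
      rw [hkras]
      exact closure_minimal (convexHull_min hgen hconv) hclosed
    exact hsub hv
  · -- Part 2
    intro hreg v hv
    intro u hu
    show g.B x u (f x - v) ≤ 0
    set T2 := {p : Euc n | g.B x u (f x - p) ≤ 0} with hT2def
    have hclosed : IsClosed T2 := by
      have c1 : Continuous fun p : Euc n => g.B x u (f x - p) :=
        (g.B x u).continuous.comp (continuous_const.sub continuous_id)
      exact isClosed_le c1 continuous_const
    have hconv : Convex ℝ T2 := by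
      intro a ha b hb s t hs ht hst
      have ha' : g.B x u (f x - a) ≤ 0 := ha
      have hb' : g.B x u (f x - b) ≤ 0 := hb
      show g.B x u (f x - (s • a + t • b)) ≤ 0
      have hfx : f x - (s • a + t • b) = s • (f x - a) + t • (f x - b) := by
        calc f x - (s • a + t • b) = (s • f x + t • f x) - (s • a + t • b) := by
              rw [← add_smul, hst, one_smul]
          _ = s • (f x - a) + t • (f x - b) := by rw [smul_sub, smul_sub]; abel
      rw [hfx, map_add, B_smul_right, B_smul_right]
      have := mul_le_mul_of_nonneg_left ha' hs
      have := mul_le_mul_of_nonneg_left hb' ht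
      simp only [mul_zero] at *
      linarith
    have hgen : S ⊆ T2 := by
      rintro p ⟨xk, vk, hxkX, hxkx, hvk, hvkl⟩
      obtain ⟨uk, huk, hukl⟩ := hu xk hxkX hxkx
      have heach : ∀ k, g.B (xk k) (uk k) (f (xk k) - vk k) ≤ 0 := by
        intro k
        refine proj_opt (hxkX k) (hvk k) ?_
        intro s hs hs1
        have hDC : ∀ w' ∈ tanCone X (xk k), w' ∈ DCone X (xk k) := fun w' hw' =>
          clarke_subset_DCone hreg.1 (hxkX k) ((hreg.2 (xk k) (hxkX k)) ▸ hw')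
        have h1 : (1 - s) • vk k ∈ DCone X (xk k) :=
          DCone_smul (by linarith) (hDC _ (hvk k).1)
        have h2 : s • uk k ∈ DCone X (xk k) := DCone_smul hs.le (hDC _ (huk k))
        have h3 := DCone_subset_tanCone (hxkX k) (DCone_add h1 h2)
        have heq : vk k + s • (uk k - vk k) = (1 - s) • vk k + s • uk k := by
          rw [smul_sub, sub_smul, one_smul]
          abel
        rw [heq]
        exact h3
      have hL : Tendsto (fun k => g.B (xk k) (uk k) (f (xk k) - vk k)) atTop
          (𝓝 (g.B x u (f x - p))) :=
        tendsto_B g hg hxkX hx hxkx hukl ((tendsto_f hf hxkX hx hxkx).sub hvkl)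
      exact le_of_tendsto hL (Eventually.of_forall heach)
    have hsub : kras X (projVF X g f) x ⊆ T2 := by
      rw [hkras]
      exact closure_minimal (convexHull_min hgen hconv) hclosed
    exact hsub hv
end

section
/- Let X ⊆ ℝ^n have non-empty interior, let g be a continuous metric on X, and let Ψ : V → ℝ be C¹ on an open neighborhood V of X such that S_ℓ := {x : Ψ(x) ≤ ℓ} ∩ X is compact for every ℓ ∈ ℝ. Assume every Krasovskii solution of the projected gradient system ẋ ∈ Π^g_X(−grad_g Ψ)(x) from every initial condition in X extends to a complete Krasovskii solution on [0,∞). If x̂ ∈ X is a strict local minimizer of Ψ on X (Ψ(x̂) < Ψ(y) for every y ∈ X with y ≠ x̂ in some relative neighborhood of x̂ in X), then x̂ is strongly stable: for every relative neighborhood U of x̂ in X there exists a relative neighborhood V' ⊆ U of x̂ such that every complete Krasovskii solution of the projected gradient system starting in V' remains in U for all t ≥ 0. -/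
open MeasureTheory Filter Topology Set
open scoped RealInnerProductSpace

variable {n : ℕ}

/-- `U` is a relative neighborhood of `x` in `X`. -/
def RelNbhd {n : ℕ} (X U : Set (Euc n)) (x : Euc n) : Prop :=
  U ⊆ X ∧ ∃ O : Set (Euc n), IsOpen O ∧ x ∈ O ∧ X ∩ O ⊆ U

lemma smul_mem_tanCone {X : Set (Euc n)} {x : Euc n} {v : Euc n} {c : ℝ} (hc : 0 < c)
    (hv : v ∈ tanCone X x) : c • v ∈ tanCone X x := by
  obtain ⟨xk, δ, hmem, hxk, hδpos, hδ0, hlim⟩ := hv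
  refine ⟨xk, fun k => c⁻¹ * δ k, hmem, hxk,
    fun k => mul_pos (inv_pos.2 hc) (hδpos k), ?_, ?_⟩
  · simpa using hδ0.const_mul c⁻¹
  · have : Tendsto (fun k => c • ((δ k)⁻¹ • (xk k - x))) atTop (𝓝 (c • v)) :=
      hlim.const_smul c
    refine this.congr fun k => ?_
    rw [smul_smul, mul_inv, inv_inv, mul_comm]

lemma gB_nonneg (g : VarMetric n) (x u : Euc n) : 0 ≤ g.B x u u := by
  rcases eq_or_ne u 0 with h | h
  · simp [h]
  · exact (g.posdef x u h).le

lemma projVF_halfspace {X : Set (Euc n)} (g : VarMetric n) {Ψ : Euc n → ℝ}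
    {gradΨ : Euc n → Euc n} {x : Euc n} (hx : x ∈ X)
    (hgrad : ∀ w : Euc n, g.B x (gradΨ x) w = fderiv ℝ Ψ x w)
    {w : Euc n} (hw : w ∈ projVF X g (fun y => -gradΨ y) x) :
    fderiv ℝ Ψ x w ≤ -(g.B x w w) ∧ fderiv ℝ Ψ x w ≤ 0 := by
  obtain ⟨htan, hmin⟩ := hw
  set f : Euc n := -gradΨ x with hf
  set A : ℝ := g.B x w w with hA
  set Bv : ℝ := g.B x w f with hBv
  have hA0 : 0 ≤ A := gB_nonneg g x w
  -- quadratic inequality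
  have key : ∀ s : ℝ, -1 < s → 0 ≤ A * s^2 + 2*(A - Bv)*s := by
    intro s hs
    have hws : (1+s) • w ∈ tanCone X x := smul_mem_tanCone (by linarith) htan
    have h1 := hmin _ hws
    -- gnorm inequality to B inequality
    have hB : g.B x (w - f) (w - f) ≤ g.B x ((1+s)•w - f) ((1+s)•w - f) := by
      have h2 : Real.sqrt (g.B x (w - f) (w - f)) ≤
          Real.sqrt (g.B x ((1+s)•w - f) ((1+s)•w - f)) := h1
      nlinarith [Real.sq_sqrt (gB_nonneg g x (w - f)),
        Real.sq_sqrt (gB_nonneg g x ((1+s)•w - f)),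
        Real.sqrt_nonneg (g.B x (w - f) (w - f)),
        Real.sqrt_nonneg (g.B x ((1+s)•w - f) ((1+s)•w - f))]
    have e1 : g.B x ((1+s)•w - f) ((1+s)•w - f)
        = (1+s)^2 * A - 2*(1+s)*Bv + g.B x f f := by
      simp only [map_sub, _root_.map_smul, ContinuousLinearMap.sub_apply,
        ContinuousLinearMap.smul_apply, smul_eq_mul, ContinuousLinearMap.coe_smul',
        Pi.smul_apply]
      rw [g.symm x f w]; ring
    have e2 : g.B x (w - f) (w - f) = A - 2*Bv + g.B x f f := by
      simp only [map_sub, ContinuousLinearMap.sub_apply]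
      rw [g.symm x f w]; ring
    rw [e1, e2] at hB
    nlinarith [hB]
  -- conclude A = Bv
  have hD : A - Bv = 0 := by
    by_contra hD
    rcases lt_or_gt_of_ne hD with hneg | hpos
    · -- D < 0, use positive s
      set m : ℝ := min (1/2 : ℝ) ((Bv - A)/(A+1)) with hm
      have hm0 : 0 < m := lt_min (by norm_num) (div_pos (by linarith) (by linarith))
      have h1 := key m (by linarith)
      have h2 : A * m ≤ Bv - A := by
        have : m ≤ (Bv - A)/(A+1) := min_le_right _ _
        have h3 : A * m ≤ A * ((Bv - A)/(A+1)) :=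
          mul_le_mul_of_nonneg_left this hA0
        have h4 : A * ((Bv - A)/(A+1)) ≤ Bv - A := by
          rw [← mul_div_assoc, div_le_iff₀ (by linarith : (0:ℝ) < A+1)]
          nlinarith
        linarith
      nlinarith
    · set m : ℝ := min (1/2 : ℝ) ((A - Bv)/(A+1)) with hm
      have hm0 : 0 < m := lt_min (by norm_num) (div_pos (by linarith) (by linarith))
      have h1 := key (-m) (by
        have : m ≤ 1/2 := min_le_left _ _
        linarith)
      have h2 : A * m ≤ A - Bv := by
        have : m ≤ (A - Bv)/(A+1) := min_le_right _ _
        have h3 : A * m ≤ A * ((A - Bv)/(A+1)) :=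
          mul_le_mul_of_nonneg_left this hA0
        have h4 : A * ((A - Bv)/(A+1)) ≤ A - Bv := by
          rw [← mul_div_assoc, div_le_iff₀ (by linarith : (0:ℝ) < A+1)]
          nlinarith
        linarith
      nlinarith
  have hfd : fderiv ℝ Ψ x w = -Bv := by
    rw [← hgrad w, ← g.symm x w (gradΨ x)]
    have : Bv = -(g.B x w (gradΨ x)) := by rw [hBv, hf, map_neg]
    linarith
  constructor
  · rw [hfd]; have : Bv = A := by linarith
    rw [this]
  · rw [hfd]; have : Bv = A := by linarith
    linarith

lemma kras_halfspace {X V : Set (Euc n)} (g : VarMetric n) {Ψ : Euc n → ℝ}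
    {gradΨ : Euc n → Euc n} (hV : IsOpen V) (hXV : X ⊆ V)
    (hΨ : ContDiffOn ℝ 1 Ψ V)
    (hgrad : ∀ y ∈ X, ∀ w : Euc n, g.B y (gradΨ y) w = fderiv ℝ Ψ y w)
    {x : Euc n} (hx : x ∈ X) {v : Euc n}
    (hv : v ∈ kras X (projVF X g (fun y => -gradΨ y)) x) :
    fderiv ℝ Ψ x v ≤ 0 := by
  set L := fderiv ℝ Ψ x with hL
  set H : Set (Euc n) := {u : Euc n | L u ≤ 0} with hH
  have hHclosed : IsClosed H := isClosed_le L.continuous continuous_const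
  have hHconv : Convex ℝ H := by
    intro a ha b hb p q hp hq hpq
    have ha' : L a ≤ 0 := ha
    have hb' : L b ≤ 0 := hb
    simp only [H, mem_setOf_eq, map_add, _root_.map_smul, smul_eq_mul]
    nlinarith
  have hS : {u | ∃ (xk : ℕ → Euc n) (vk : ℕ → Euc n),
      (∀ k, xk k ∈ X) ∧ Tendsto xk atTop (𝓝 x) ∧
      (∀ k, vk k ∈ projVF X g (fun y => -gradΨ y) (xk k)) ∧
      Tendsto vk atTop (𝓝 u)} ⊆ H := by
    rintro u ⟨xk, vk, hmemX, hxk, hvk, hlim⟩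
    have hfd : ∀ k, fderiv ℝ Ψ (xk k) (vk k) ≤ 0 := fun k =>
      (projVF_halfspace g (hmemX k) (hgrad _ (hmemX k)) (hvk k)).2
    have hcont : ContinuousOn (fderiv ℝ Ψ) V :=
      hΨ.continuousOn_fderiv_of_isOpen hV le_rfl
    have hca : ContinuousAt (fderiv ℝ Ψ) x :=
      hcont.continuousAt (hV.mem_nhds (hXV hx))
    have hLk : Tendsto (fun k => fderiv ℝ Ψ (xk k)) atTop (𝓝 L) :=
      hca.tendsto.comp hxk
    have happ : Tendsto (fun k => fderiv ℝ Ψ (xk k) (vk k)) atTop (𝓝 (L u)) := by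
      have : Tendsto (fun k => (fderiv ℝ Ψ (xk k), vk k)) atTop (𝓝 (L, u)) :=
        hLk.prodMk_nhds hlim
      exact (isBoundedBilinearMap_apply.continuous.tendsto (L, u)).comp this
    exact le_of_tendsto happ (Eventually.of_forall hfd)
  have : closure (convexHull ℝ {u | ∃ (xk : ℕ → Euc n) (vk : ℕ → Euc n),
      (∀ k, xk k ∈ X) ∧ Tendsto xk atTop (𝓝 x) ∧
      (∀ k, vk k ∈ projVF X g (fun y => -gradΨ y) (xk k)) ∧
      Tendsto vk atTop (𝓝 u)}) ⊆ H :=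
    hHclosed.closure_subset_iff.2 (convexHull_min hS hHconv)
  exact this hv

lemma sol_contOn {x v : ℝ → Euc n} (hloc : LocallyIntegrableOn v (Ici 0) volume)
    (hrep : ∀ t ∈ Ici (0:ℝ), x t = x 0 + ∫ s in (0:ℝ)..t, v s) {T : ℝ} (hT : 0 ≤ T) :
    ContinuousOn x (Icc 0 T) := by
  have hvint : IntegrableOn v (Icc 0 T) volume :=
    hloc.integrableOn_compact_subset (Icc_subset_Ici_self) isCompact_Icc
  have hprim : ContinuousOn (fun u => ∫ s in Ioc 0 u, v s) (Icc 0 T) :=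
    intervalIntegral.continuousOn_primitive hvint
  refine ((continuousOn_const (c := x 0)).add hprim).congr fun u hu => ?_
  rw [hrep u hu.1, intervalIntegral.integral_of_le hu.1]; rfl

lemma psi_mono {X V : Set (Euc n)} (hV : IsOpen V) (hXV : X ⊆ V) {Ψ : Euc n → ℝ}
    (hΨ : ContDiffOn ℝ 1 Ψ V) {x v : ℝ → Euc n}
    (hX : ∀ t ∈ Ici (0:ℝ), x t ∈ X)
    (hloc : LocallyIntegrableOn v (Ici 0) volume)
    (hrep : ∀ t ∈ Ici (0:ℝ), x t = x 0 + ∫ s in (0:ℝ)..t, v s)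
    (hineq : ∀ᵐ t ∂(volume.restrict (Ici (0:ℝ))), fderiv ℝ Ψ (x t) (v t) ≤ 0) :
    ∀ t ∈ Ici (0:ℝ), Ψ (x t) ≤ Ψ (x 0) := by
  intro T hT
  rcases eq_or_lt_of_le (mem_Ici.1 hT : (0:ℝ) ≤ T) with h0 | hTpos
  · rw [← h0]
  set w : ℝ → ℝ := fun s => ‖v s‖ + 1 with hw
  have hwpos : ∀ s, 0 < w s := fun s => by positivity
  have hvint : IntegrableOn v (Icc 0 T) volume :=
    hloc.integrableOn_compact_subset (Icc_subset_Ici_self) isCompact_Icc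
  have hwint : IntegrableOn w (Icc 0 T) volume :=
    hvint.norm.add (integrableOn_const measure_Icc_lt_top.ne)
  have hxcont : ContinuousOn x (Icc 0 T) := sol_contOn hloc hrep hT
  have hΨx : ContinuousOn (fun u => Ψ (x u)) (Icc 0 T) :=
    (hΨ.continuousOn.comp hxcont) fun u hu => hXV (hX u hu.1)
  have hWcont : ContinuousOn (fun u => ∫ s in (0:ℝ)..u, w s) (Icc 0 T) := by
    have hprim : ContinuousOn (fun u => ∫ s in Ioc 0 u, w s) (Icc 0 T) :=
      intervalIntegral.continuousOn_primitive hwint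
    exact hprim.congr fun u hu => intervalIntegral.integral_of_le hu.1
  -- interval integrability helpers
  have hivv : ∀ a b, a ∈ Icc (0:ℝ) T → b ∈ Icc (0:ℝ) T → a ≤ b →
      IntervalIntegrable v volume a b := by
    intro a b ha hb hab
    rw [intervalIntegrable_iff_integrableOn_Icc_of_le hab]
    exact hvint.mono_set (Icc_subset_Icc ha.1 hb.2)
  have hivw : ∀ a b, a ∈ Icc (0:ℝ) T → b ∈ Icc (0:ℝ) T → a ≤ b →
      IntervalIntegrable w volume a b := by
    intro a b ha hb hab
    rw [intervalIntegrable_iff_integrableOn_Icc_of_le hab]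
    exact hwint.mono_set (Icc_subset_Icc ha.1 hb.2)
  -- main ε-claim
  have main : ∀ ε > (0:ℝ), Ψ (x T) ≤ Ψ (x 0) + ε * ∫ s in (0:ℝ)..T, w s := by
    intro ε hε
    set A : Set ℝ := {r ∈ Icc (0:ℝ) T | Ψ (x r) ≤ Ψ (x 0) + ε * ∫ s in (0:ℝ)..r, w s}
      with hA
    have h0A : (0:ℝ) ∈ A := by
      constructor
      · exact ⟨le_refl _, hT⟩
      · simp
    have hbdd : BddAbove A := ⟨T, fun r hr => hr.1.2⟩
    have hAclosed : IsClosed A := by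
      have : A = Icc 0 T ∩ (fun r => Ψ (x r) - Ψ (x 0) - ε * ∫ s in (0:ℝ)..r, w s) ⁻¹' Iic 0 := by
        ext r; simp only [hA, mem_sep_iff, mem_inter_iff, mem_preimage, mem_Iic]
        constructor
        · rintro ⟨h1, h2⟩; exact ⟨h1, by linarith⟩
        · rintro ⟨h1, h2⟩; exact ⟨h1, by linarith⟩
      rw [this]
      exact ContinuousOn.preimage_isClosed_of_isClosed
        ((hΨx.sub continuousOn_const).sub (hWcont.const_smul ε)) isClosed_Icc isClosed_Iic
    set c : ℝ := sSup A with hc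
    have hcA : c ∈ A := hAclosed.csSup_mem ⟨0, h0A⟩ hbdd
    have hc0 : (0:ℝ) ≤ c := hcA.1.1
    have hcT : c ≤ T := hcA.1.2
    rcases eq_or_lt_of_le hcT with hceq | hclt
    · rw [← hceq]; exact hcA.2
    · -- local step at c, derive contradiction
      exfalso
      set p : Euc n := x c with hp
      have hpV : p ∈ V := hXV (hX c hc0)
      have hcontF : ContinuousAt (fderiv ℝ Ψ) p :=
        (hΨ.continuousOn_fderiv_of_isOpen hV le_rfl).continuousAt (hV.mem_nhds hpV)
      obtain ⟨ρ₁, hρ₁, hρball⟩ : ∃ ρ₁ > 0, ∀ y, dist y p < ρ₁ →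
          ‖fderiv ℝ Ψ y - fderiv ℝ Ψ p‖ < ε/2 := by
        have := Metric.continuousAt_iff.1 hcontF (ε/2) (by linarith)
        obtain ⟨δ, hδ, hδ'⟩ := this
        exact ⟨δ, hδ, fun y hy => by rw [← dist_eq_norm]; exact hδ' hy⟩
      obtain ⟨ρ₂, hρ₂, hρ₂V⟩ := Metric.isOpen_iff.1 hV p hpV
      set ρ : ℝ := min ρ₁ ρ₂ with hρdef
      have hρ : 0 < ρ := lt_min hρ₁ hρ₂
      have hballV : Metric.ball p ρ ⊆ V :=
        (Metric.ball_subset_ball (min_le_right _ _)).trans hρ₂V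
      have hballF : ∀ y ∈ Metric.ball p ρ, ‖fderiv ℝ Ψ y - fderiv ℝ Ψ p‖ ≤ ε/2 :=
        fun y hy => (hρball y (lt_of_lt_of_le hy (min_le_left _ _))).le
      -- continuity of x at c within Icc 0 T
      obtain ⟨δ, hδ, hδ'⟩ : ∃ δ > 0, ∀ u ∈ Icc (0:ℝ) T, |u - c| < δ → ‖x u - p‖ < ρ/2 := by
        have := Metric.continuousWithinAt_iff.1 (hxcont c hcA.1) (ρ/2) (by linarith)
        obtain ⟨δ, hδ, hδ'⟩ := this
        refine ⟨δ, hδ, fun u hu hud => ?_⟩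
        have := hδ' hu (by rwa [Real.dist_eq])
        rwa [dist_eq_norm] at this
      set h : ℝ := min (δ/2) (T - c) with hh
      have hhpos : 0 < h := lt_min (by linarith) (by linarith)
      set q : ℝ := c + h with hq
      have hqT : q ≤ T := by
        have : h ≤ T - c := min_le_right _ _
        simp only [hq]; linarith
      have hqmem : q ∈ Icc (0:ℝ) T := ⟨by linarith [hc0, hhpos.le], hqT⟩
      have hcq : c ≤ q := by simp only [hq]; linarith
      have hxball : ∀ u ∈ Icc c q, x u ∈ Metric.ball p (ρ/2) := by
        intro u hu
        have huT : u ∈ Icc (0:ℝ) T := ⟨hc0.trans hu.1, hu.2.trans hqT⟩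
        have : |u - c| < δ := by
          rw [abs_sub_lt_iff]
          constructor
          · have : h ≤ δ/2 := min_le_left _ _
            have := hu.2; simp only [hq] at this; linarith
          · linarith [hu.1, hδ]
        exact Metric.mem_ball.2 (by rw [dist_eq_norm]; exact hδ' u huT this)
      have hxq_ball : x q ∈ Metric.ball p ρ := by
        have := hxball q ⟨hcq, le_refl _⟩
        exact Metric.ball_subset_ball (by linarith) this
      -- x q - p = ∫ c..q v
      have hdiff : x q - p = ∫ s in c..q, v s := by
        rw [hp, hrep q hqmem.1, hrep c hc0]
        have h1 : IntervalIntegrable v volume 0 q := hivv 0 q ⟨le_refl _, hT⟩ hqmem (hqmem.1)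
        have h2 : IntervalIntegrable v volume 0 c := hivv 0 c ⟨le_refl _, hT⟩ hcA.1 hc0
        have := intervalIntegral.integral_interval_sub_left h1 h2
        rw [← this]; abel
      -- MVT estimate
      set L : Euc n →L[ℝ] ℝ := fderiv ℝ Ψ p with hL
      have hmvt : ‖(Ψ (x q) - L (x q)) - (Ψ p - L p)‖ ≤ ε/2 * ‖x q - p‖ := by
        refine Convex.norm_image_sub_le_of_norm_hasFDerivWithin_le
          (f := fun z => Ψ z - L z) (f' := fun y => fderiv ℝ Ψ y - L)
          (fun y hy => ?_) (fun y hy => hballF y hy) (convex_ball p ρ)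
          (Metric.mem_ball_self hρ) hxq_ball
        have hdiffy : DifferentiableAt ℝ Ψ y :=
          ((hΨ.differentiableOn one_ne_zero).differentiableAt (hV.mem_nhds (hballV hy)))
        exact ((hdiffy.hasFDerivAt.sub L.hasFDerivAt)).hasFDerivWithinAt
      -- integral estimates
      have hivcq : IntervalIntegrable v volume c q := hivv c q hcA.1 hqmem hcq
      have hiwcq : IntervalIntegrable w volume c q := hivw c q hcA.1 hqmem hcq
      have hLint : ∫ s in c..q, L (v s) = L (∫ s in c..q, v s) :=
        L.intervalIntegral_comp_comm hivcq
      have hLv_int : IntervalIntegrable (fun s => L (v s)) volume c q := by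
        rw [intervalIntegrable_iff_integrableOn_Icc_of_le hcq]
        exact L.integrable_comp (hvint.mono_set (Icc_subset_Icc hc0 hqmem.2))
      have hae : ∀ᵐ s ∂(volume.restrict (Icc c q)), L (v s) ≤ ε/2 * w s := by
        have h1 : ∀ᵐ s ∂(volume.restrict (Icc c q)), fderiv ℝ Ψ (x s) (v s) ≤ 0 :=
          ae_restrict_of_ae_restrict_of_subset
            (fun s hs => hc0.trans hs.1) hineq
        have h2 : ∀ᵐ s ∂(volume.restrict (Icc c q)), s ∈ Icc c q :=
          ae_restrict_mem measurableSet_Icc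
        filter_upwards [h1, h2] with s hs1 hs2
        have hxs : x s ∈ Metric.ball p ρ :=
          Metric.ball_subset_ball (by linarith) (hxball s hs2)
        have hbound : ‖fderiv ℝ Ψ (x s) - L‖ ≤ ε/2 := hballF _ hxs
        have : L (v s) = fderiv ℝ Ψ (x s) (v s) - (fderiv ℝ Ψ (x s) - L) (v s) := by
          simp [ContinuousLinearMap.sub_apply]
        rw [this]
        have habs : |(fderiv ℝ Ψ (x s) - L) (v s)| ≤ ε/2 * ‖v s‖ := by
          calc |(fderiv ℝ Ψ (x s) - L) (v s)| ≤ ‖fderiv ℝ Ψ (x s) - L‖ * ‖v s‖ :=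
              (fderiv ℝ Ψ (x s) - L).le_opNorm (v s)
            _ ≤ ε/2 * ‖v s‖ := by
              apply mul_le_mul_of_nonneg_right hbound (norm_nonneg _)
        have hws : w s = ‖v s‖ + 1 := rfl
        have hb := (abs_le.1 habs).1
        rw [hws]
        linarith [hε.le, norm_nonneg (v s), hs1]
      have hint1 : ∫ s in c..q, L (v s) ≤ ∫ s in c..q, ε/2 * w s :=
        intervalIntegral.integral_mono_ae_restrict hcq hLv_int (hiwcq.const_mul _) hae
      have hnorm1 : ‖x q - p‖ ≤ ∫ s in c..q, w s := by
        rw [hdiff]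
        calc ‖∫ s in c..q, v s‖ ≤ ∫ s in c..q, ‖v s‖ :=
            intervalIntegral.norm_integral_le_integral_norm hcq
          _ ≤ ∫ s in c..q, w s := by
            apply intervalIntegral.integral_mono_on hcq hivcq.norm hiwcq
            intro s _; simp [hw]
      have hwcq_nonneg : 0 ≤ ∫ s in c..q, w s :=
        intervalIntegral.integral_nonneg hcq (fun s _ => (hwpos s).le)
      -- combine
      have hkey : Ψ (x q) - Ψ (x c) ≤ ε * ∫ s in c..q, w s := by
        have e1 : Ψ (x q) - Ψ p ≤ L (x q - p) + ε/2 * ‖x q - p‖ := by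
          have := (abs_le.1 (by rwa [Real.norm_eq_abs] at hmvt)).2
          rw [map_sub]; linarith
        have e2 : L (x q - p) ≤ ε/2 * ∫ s in c..q, w s := by
          rw [hdiff, ← hLint]
          calc ∫ s in c..q, L (v s) ≤ ∫ s in c..q, ε/2 * w s := hint1
            _ = ε/2 * ∫ s in c..q, w s := intervalIntegral.integral_const_mul _ _
        have e3 : ε/2 * ‖x q - p‖ ≤ ε/2 * ∫ s in c..q, w s :=
          mul_le_mul_of_nonneg_left hnorm1 (by linarith)
        rw [hp] at e1
        linarith
      have hsplit : (∫ s in (0:ℝ)..c, w s) + ∫ s in c..q, w s = ∫ s in (0:ℝ)..q, w s :=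
        intervalIntegral.integral_add_adjacent_intervals
          (hivw 0 c ⟨le_refl _, hT⟩ hcA.1 hc0) hiwcq
      have hqA : q ∈ A := by
        refine ⟨hqmem, ?_⟩
        have := hcA.2
        rw [← hsplit]
        nlinarith [hkey]
      have : q ≤ c := le_csSup hbdd hqA
      simp only [hq] at this; linarith
  -- let ε → 0
  have hC : 0 ≤ ∫ s in (0:ℝ)..T, w s :=
    intervalIntegral.integral_nonneg hT (fun s _ => (hwpos s).le)
  by_contra hcon
  push_neg at hcon
  set C := ∫ s in (0:ℝ)..T, w s with hCdef
  have hεc := main ((Ψ (x T) - Ψ (x 0)) / (2 * (C + 1))) (div_pos (by linarith) (by positivity))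
  have h1 : (Ψ (x T) - Ψ (x 0)) / (2 * (C + 1)) * C ≤ (Ψ (x T) - Ψ (x 0)) / 2 := by
    rw [div_mul_eq_mul_div, div_le_div_iff₀ (by positivity) (by norm_num)]
    nlinarith
  linarith

/-- strict local minimizers of projected gradient flows
are strongly stable (Theorem 5.4 (ii)). -/
theorem stmt_7 {n : ℕ} (X : Set (Euc n)) (g : VarMetric n)
    (hint : (interior X).Nonempty)
    (V : Set (Euc n)) (hV : IsOpen V) (hXV : X ⊆ V)
    (Ψ : Euc n → ℝ) (hΨ : ContDiffOn ℝ 1 Ψ V)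
    (hg : ContinuousOn g.B X)
    (hcompact : ∀ ℓ : ℝ, IsCompact ({y | Ψ y ≤ ℓ} ∩ X))
    (gradΨ : Euc n → Euc n)
    (hgrad : ∀ x ∈ X, ∀ w : Euc n, g.B x (gradΨ x) w = fderiv ℝ Ψ x w)
    (hext : ∀ x₀ ∈ X, ∀ T > (0:ℝ), ∀ x : ℝ → Euc n,
      IsSolOn X (kras X (projVF X g (fun y => -gradΨ y))) x₀ x (Set.Ico 0 T) →
      ∃ y : ℝ → Euc n,
        IsSolOn X (kras X (projVF X g (fun y => -gradΨ y))) x₀ y (Set.Ici 0) ∧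
        ∀ t ∈ Set.Ico (0:ℝ) T, y t = x t)
    (xst : Euc n) (hxst : xst ∈ X)
    (hmin : ∃ U : Set (Euc n), RelNbhd X U xst ∧ ∀ y ∈ U, y ≠ xst → Ψ xst < Ψ y) :
    ∀ U : Set (Euc n), RelNbhd X U xst →
      ∃ V' : Set (Euc n), RelNbhd X V' xst ∧ V' ⊆ U ∧
        ∀ x₀ ∈ V', ∀ x : ℝ → Euc n,
          IsSolOn X (kras X (projVF X g (fun y => -gradΨ y))) x₀ x (Set.Ici 0) →
          ∀ t ∈ Set.Ici (0:ℝ), x t ∈ U := by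
  intro U hU
  obtain ⟨U₀, hU₀, hU₀min⟩ := hmin
  obtain ⟨hU₀X, O₀, hO₀open, hxO₀, hXO₀⟩ := hU₀
  obtain ⟨hUX, O₁, hO₁open, hxO₁, hXO₁⟩ := hU
  -- choose ε with closed ball inside both open sets
  obtain ⟨ε', hε', hball'⟩ := Metric.isOpen_iff.1 (hO₀open.inter hO₁open) xst ⟨hxO₀, hxO₁⟩
  set ε : ℝ := ε'/2 with hεdef
  have hε : 0 < ε := by positivity
  have hball : Metric.closedBall xst ε ⊆ O₀ ∩ O₁ :=
    (Metric.closedBall_subset_ball (by simp only [hεdef]; linarith)).trans hball'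
  have hXcb : ∀ y ∈ X, dist y xst ≤ ε → y ∈ U₀ ∩ U := by
    intro y hy hd
    have h2 := hball (Metric.mem_closedBall.2 hd)
    exact ⟨hXO₀ ⟨hy, h2.1⟩, hXO₁ ⟨hy, h2.2⟩⟩
  -- the level ℓ
  set Sp : Set (Euc n) := X ∩ Metric.sphere xst ε with hSp
  have hSpmin : ∀ y ∈ Sp, Ψ xst < Ψ y := by
    rintro y ⟨hyX, hyS⟩
    have hdist : dist y xst = ε := Metric.mem_sphere.1 hyS
    have hyU₀ : y ∈ U₀ := (hXcb y hyX hdist.le).1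
    have hyne : y ≠ xst := by
      intro h; rw [h] at hdist; simp at hdist; linarith
    exact hU₀min y hyU₀ hyne
  obtain ⟨ℓ, hℓgt, hℓS⟩ : ∃ ℓ : ℝ, Ψ xst < ℓ ∧ ∀ y ∈ Sp, ℓ ≤ Ψ y := by
    set K : Set (Euc n) := ({y | Ψ y ≤ Ψ xst + 1} ∩ X) ∩ Metric.sphere xst ε with hK
    have hKcomp : IsCompact K := (hcompact (Ψ xst + 1)).inter_right Metric.isClosed_sphere
    rcases K.eq_empty_or_nonempty with hKe | hKne
    · refine ⟨Ψ xst + 1, by linarith, fun y hy => ?_⟩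
      by_contra hlt
      push_neg at hlt
      have : y ∈ K := ⟨⟨hlt.le, hy.1⟩, hy.2⟩
      rw [hKe] at this; exact this
    · have hKV : K ⊆ V := fun y hy => hXV hy.1.2
      obtain ⟨y₀, hy₀K, hy₀min⟩ := hKcomp.exists_isMinOn hKne (hΨ.continuousOn.mono hKV)
      have hy₀Sp : y₀ ∈ Sp := ⟨hy₀K.1.2, hy₀K.2⟩
      have hm : Ψ xst < Ψ y₀ := hSpmin y₀ hy₀Sp
      refine ⟨min (Ψ y₀) (Ψ xst + 1), lt_min hm (by linarith), fun y hy => ?_⟩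
      rcases le_or_gt (Ψ y) (Ψ xst + 1) with h1 | h1
      · have : y ∈ K := ⟨⟨h1, hy.1⟩, hy.2⟩
        exact (min_le_left _ _).trans (hy₀min this)
      · exact (min_le_right _ _).trans h1.le
  set ℓ' : ℝ := (Ψ xst + ℓ)/2 with hℓ'def
  have hℓ'1 : Ψ xst < ℓ' := by simp only [hℓ'def]; linarith
  have hℓ'2 : ℓ' < ℓ := by simp only [hℓ'def]; linarith
  -- the neighborhood V'
  set O : Set (Euc n) := Metric.ball xst ε ∩ (V ∩ Ψ ⁻¹' Iio ℓ') with hO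
  have hOopen : IsOpen O :=
    Metric.isOpen_ball.inter (hΨ.continuousOn.isOpen_inter_preimage hV isOpen_Iio)
  have hxstO : xst ∈ O :=
    ⟨Metric.mem_ball_self hε, hXV hxst, by simp only [mem_preimage, mem_Iio]; exact hℓ'1⟩
  refine ⟨X ∩ O, ⟨inter_subset_left, O, hOopen, hxstO, subset_refl _⟩, ?_, ?_⟩
  · rintro y ⟨hyX, hyO⟩
    exact (hXcb y hyX (Metric.mem_ball.1 hyO.1).le).2
  · rintro x₀ ⟨hx₀X, hx₀O⟩ x ⟨hx0, hxX, v, hvloc, hrep, hvae⟩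
    have hrep' : ∀ t ∈ Ici (0:ℝ), x t = x 0 + ∫ s in (0:ℝ)..t, v s := by
      intro t ht; rw [hx0]; exact hrep t ht
    have hineq : ∀ᵐ t ∂(volume.restrict (Ici (0:ℝ))), fderiv ℝ Ψ (x t) (v t) ≤ 0 := by
      filter_upwards [hvae, ae_restrict_mem measurableSet_Ici] with t hvt ht
      exact kras_halfspace g hV hXV hΨ hgrad (hxX t ht) hvt
    have hmono := psi_mono hV hXV hΨ hxX hvloc hrep' hineq
    have hΨx₀ : ∀ t ∈ Ici (0:ℝ), Ψ (x t) < ℓ' := by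
      intro t ht
      have h1 := hmono t ht
      have h2 : Ψ (x 0) < ℓ' := by rw [hx0]; exact hx₀O.2.2
      linarith
    have hdist : ∀ t ∈ Ici (0:ℝ), dist (x t) xst < ε := by
      intro t ht
      by_contra hge
      push_neg at hge
      have hxcont : ContinuousOn x (Icc 0 t) := sol_contOn hvloc hrep' ht
      have hFc : ContinuousOn (fun r => dist (x r) xst) (Icc 0 t) :=
        (continuous_id.dist continuous_const).comp_continuousOn hxcont
      have hF0 : dist (x 0) xst < ε := by
        rw [hx0]; exact Metric.mem_ball.1 hx₀O.1
      have hIVT := intermediate_value_Icc (ht : (0:ℝ) ≤ t) hFc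
      have hεmem : ε ∈ Icc (dist (x 0) xst) (dist (x t) xst) := ⟨hF0.le, hge⟩
      obtain ⟨r, hrmem, hrval⟩ := hIVT hεmem
      have hrX : x r ∈ X := hxX r hrmem.1
      have hrSp : x r ∈ Sp := ⟨hrX, Metric.mem_sphere.2 hrval⟩
      have := hℓS _ hrSp
      have := hΨx₀ r hrmem.1
      linarith
    intro t ht
    exact (hXcb (x t) (hxX t ht) (hdist t ht).le).2
end

section
/- Let X ⊆ ℝ^n, let g be a metric on X, and let f : X → ℝ^n be a vector field. If K[Π^g_X f](x) ∩ T_x X = Π^g_X f(x) holds for all x ∈ X, then for every x₀ ∈ X a function x : [0,T) → X is a Carathéodory solution of ẋ ∈ Π^g_X f(x), x(0)=x₀, if and only if it is a Krasovskii solution. -/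
open MeasureTheory Filter Topology Set
open scoped RealInnerProductSpace

variable {n : ℕ}

private lemma ae_mem_tanCone {n : ℕ} (X : Set (Euc n)) {T : ℝ} (hT : 0 < T) {x₀ : Euc n}
    {x v : ℝ → Euc n}
    (hX : ∀ t ∈ Set.Ico 0 T, x t ∈ X)
    (hv : LocallyIntegrableOn v (Set.Ico 0 T) volume)
    (hxint : ∀ t ∈ Set.Ico 0 T, x t = x₀ + ∫ s in (0:ℝ)..t, v s) :
    ∀ᵐ t ∂(volume.restrict (Set.Ico 0 T)), v t ∈ tanCone X (x t) := by
  rw [ae_restrict_iff' measurableSet_Ico]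
  have key : ∀ b : ℝ, 0 < b → b < T →
      ∀ᵐ t : ℝ ∂volume, t ∈ Set.Ioo 0 b → v t ∈ tanCone X (x t) := by
    intro b hb hbT
    have hvb : IntegrableOn v (Set.Icc 0 b) volume :=
      hv.integrableOn_compact_subset (fun s hs => ⟨hs.1, lt_of_le_of_lt hs.2 hbT⟩) isCompact_Icc
    set w : ℝ → Euc n := (Set.Icc 0 b).indicator v with hw_def
    have hw : Integrable w volume := hvb.integrable_indicator measurableSet_Icc
    have hwloc : LocallyIntegrable w volume := hw.locallyIntegrable
    filter_upwards [IsUnifLocDoublingMeasure.ae_tendsto_average_norm_sub (μ := volume) hwloc 1]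
      with t ht htmem
    obtain ⟨ht0, htb⟩ := htmem
    have hbt : 0 < b - t := sub_pos.mpr htb
    have htIcc : t ∈ Set.Icc (0:ℝ) b := ⟨ht0.le, htb.le⟩
    set δ : ℕ → ℝ := fun k => (b - t) / (k + 1) with hδ_def
    have hδpos : ∀ k, 0 < δ k := fun k => div_pos hbt (by positivity)
    have hδ0 : Tendsto δ atTop (𝓝 0) := by
      have h1 := tendsto_one_div_add_atTop_nhds_zero_nat.const_mul (b - t)
      simpa [hδ_def, mul_one_div, div_eq_mul_inv] using h1
    have hδlim : Tendsto δ atTop (𝓝[>] 0) :=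
      tendsto_nhdsWithin_iff.mpr ⟨hδ0, Eventually.of_forall fun k => hδpos k⟩
    have hA : Tendsto (fun k => ⨍ y in Metric.closedBall t (δ k), ‖w y - w t‖) atTop (𝓝 0) :=
      ht (fun _ => t) δ hδlim (Eventually.of_forall fun k =>
        Metric.mem_closedBall_self (by rw [one_mul]; exact (hδpos k).le))
    have hδle : ∀ k, δ k ≤ b - t := fun k =>
      div_le_self hbt.le (by linarith [Nat.cast_nonneg (α := ℝ) k])
    have hmem2 : ∀ k, t + δ k ≤ b := fun k => by linarith [hδle k]
    have htmemI : t ∈ Set.Ico (0:ℝ) T := ⟨ht0.le, lt_trans htb hbT⟩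
    have hmem : ∀ k, t + δ k ∈ Set.Ico (0:ℝ) T := fun k =>
      ⟨add_nonneg ht0.le (hδpos k).le, lt_of_le_of_lt (hmem2 k) hbT⟩
    have hii : ∀ c d : ℝ, c ∈ Set.Icc 0 b → d ∈ Set.Icc 0 b →
        IntervalIntegrable v volume c d :=
      fun c d hc hd => (hvb.mono_set (Set.uIcc_subset_Icc hc hd)).intervalIntegrable
    have hdiff : ∀ k, x (t + δ k) - x t = ∫ s in t..(t + δ k), v s := by
      intro k
      rw [hxint _ (hmem k), hxint _ htmemI, add_sub_add_left_eq_sub]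
      exact intervalIntegral.integral_interval_sub_left
        (hii 0 (t + δ k) ⟨le_rfl, hb.le⟩ ⟨add_nonneg ht0.le (hδpos k).le, hmem2 k⟩)
        (hii 0 t ⟨le_rfl, hb.le⟩ htIcc)
    have hbound : ∀ k, ‖(δ k)⁻¹ • (x (t + δ k) - x t) - v t‖
        ≤ 2 * ⨍ y in Metric.closedBall t (δ k), ‖w y - w t‖ := by
      intro k
      have hδk := hδpos k
      have hne : δ k ≠ 0 := hδk.ne'
      have h1 : (δ k)⁻¹ • (x (t + δ k) - x t) - v t
          = (δ k)⁻¹ • (∫ s in t..(t + δ k), (v s - v t)) := by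
        rw [hdiff k, intervalIntegral.integral_sub
            (hii t (t + δ k) htIcc ⟨add_nonneg ht0.le hδk.le, hmem2 k⟩)
            intervalIntegrable_const,
          intervalIntegral.integral_const, add_sub_cancel_left, smul_sub, inv_smul_smul₀ hne]
      rw [h1, norm_smul, norm_inv, Real.norm_of_nonneg hδk.le]
      have h2 : ‖∫ s in t..(t + δ k), (v s - v t)‖
          ≤ ∫ s in Set.Ioc t (t + δ k), ‖w s - w t‖ := by
        refine le_trans (intervalIntegral.norm_integral_le_integral_norm (by linarith)) ?_
        rw [intervalIntegral.integral_of_le (by linarith)]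
        refine le_of_eq (setIntegral_congr_fun measurableSet_Ioc fun s hs => ?_)
        have hs' : s ∈ Set.Icc (0:ℝ) b := ⟨le_trans ht0.le hs.1.le, le_trans hs.2 (hmem2 k)⟩
        rw [hw_def, Set.indicator_of_mem hs', Set.indicator_of_mem htIcc]
      have h3 : ∫ s in Set.Ioc t (t + δ k), ‖w s - w t‖
          ≤ ∫ s in Metric.closedBall t (δ k), ‖w s - w t‖ := by
        have hfin : volume (Metric.closedBall t (δ k)) < ⊤ := by
          rw [Real.volume_closedBall]; exact ENNReal.ofReal_lt_top
        refine setIntegral_mono_set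
          ((hw.integrableOn.sub (integrableOn_const hfin.ne)).norm)
          (Eventually.of_forall fun s => norm_nonneg _) (HasSubset.Subset.eventuallyLE ?_)
        rw [Real.closedBall_eq_Icc]
        exact fun s hs => ⟨by linarith [hs.1], hs.2⟩
      have h4 : ∫ s in Metric.closedBall t (δ k), ‖w s - w t‖
          = (2 * δ k) * ⨍ y in Metric.closedBall t (δ k), ‖w y - w t‖ := by
        rw [setAverage_eq, smul_eq_mul, Real.volume_real_closedBall hδk.le,
          mul_inv_cancel_left₀ (by positivity : (0:ℝ) < 2 * δ k).ne']
      calc (δ k)⁻¹ * ‖∫ s in t..(t + δ k), (v s - v t)‖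
          ≤ (δ k)⁻¹ * ((2 * δ k) * ⨍ y in Metric.closedBall t (δ k), ‖w y - w t‖) :=
            mul_le_mul_of_nonneg_left (h2.trans (h3.trans_eq h4)) (inv_nonneg.2 hδk.le)
        _ = 2 * ⨍ y in Metric.closedBall t (δ k), ‖w y - w t‖ := by
            rw [mul_comm 2 (δ k), mul_assoc, inv_mul_cancel_left₀ hne]
    have hlim : Tendsto (fun k => (δ k)⁻¹ • (x (t + δ k) - x t)) atTop (𝓝 (v t)) := by
      rw [tendsto_iff_norm_sub_tendsto_zero]
      exact squeeze_zero (fun k => norm_nonneg _) hbound (by simpa using hA.const_mul 2)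
    have hxk : Tendsto (fun k => x (t + δ k)) atTop (𝓝 (x t)) := by
      have h5 : ∀ k, x (t + δ k) = x t + δ k • ((δ k)⁻¹ • (x (t + δ k) - x t)) := by
        intro k
        rw [smul_inv_smul₀ (hδpos k).ne']
        abel
      rw [show (fun k => x (t + δ k))
          = fun k => x t + δ k • ((δ k)⁻¹ • (x (t + δ k) - x t)) from funext h5]
      have h6 : Tendsto (fun k => δ k • ((δ k)⁻¹ • (x (t + δ k) - x t))) atTop
          (𝓝 ((0:ℝ) • v t)) := hδ0.smul hlim
      simpa using tendsto_const_nhds.add h6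
    exact ⟨fun k => x (t + δ k), δ, fun k => hX _ (hmem k), hxk, hδpos, hδ0, hlim⟩
  have h0 : ∀ᵐ t : ℝ ∂volume, t ≠ 0 := by simp [ae_iff]
  have key' : ∀ᵐ t : ℝ ∂volume, ∀ m : ℕ,
      t ∈ Set.Ioo 0 (T - T / (m + 2)) → v t ∈ tanCone X (x t) := by
    rw [ae_all_iff]
    intro m
    have h1 : (1:ℝ) < (m:ℝ) + 2 := by linarith [Nat.cast_nonneg (α := ℝ) m]
    exact key _ (by have := div_lt_self hT h1; linarith)
      (sub_lt_self T (by positivity))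
  filter_upwards [h0, key'] with t ht0 htm htI
  have hTt : 0 < T - t := sub_pos.mpr htI.2
  obtain ⟨m, hm⟩ := exists_nat_gt (T / (T - t))
  refine htm m ⟨lt_of_le_of_ne htI.1 (Ne.symm ht0), ?_⟩
  have h1 : T < (T - t) * m := by
    have := (div_lt_iff₀ hTt).mp hm
    linarith
  have h2 : T / ((m:ℝ) + 2) < T - t := by
    rw [div_lt_iff₀ (by positivity)]
    nlinarith [hTt.le, Nat.cast_nonneg (α := ℝ) m]
  linarith

/-- pointwise condition for equivalence of Carathéodory and
Krasovskii solutions (Lemma 6.2). -/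
theorem stmt_8 {n : ℕ} (X : Set (Euc n)) (g : VarMetric n) (f : Euc n → Euc n)
    (h : ∀ x ∈ X, kras X (projVF X g f) x ∩ tanCone X x = projVF X g f x) :
    ∀ x₀ ∈ X, ∀ T > (0:ℝ), ∀ x : ℝ → Euc n,
      (IsSolOn X (projVF X g f) x₀ x (Set.Ico 0 T) ↔
       IsSolOn X (kras X (projVF X g f)) x₀ x (Set.Ico 0 T)) := by
  intro x₀ hx₀ T hT x
  constructor
  · rintro ⟨h0, hXmem, v, hvint, hxint, hae⟩
    refine ⟨h0, hXmem, v, hvint, hxint, ?_⟩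
    filter_upwards [hae, ae_restrict_mem measurableSet_Ico] with t hvt ht
    exact subset_closure (subset_convexHull ℝ _
      ⟨fun _ => x t, fun _ => v t, fun _ => hXmem t ht, tendsto_const_nhds,
        fun _ => hvt, tendsto_const_nhds⟩)
  · rintro ⟨h0, hXmem, v, hvint, hxint, hae⟩
    refine ⟨h0, hXmem, v, hvint, hxint, ?_⟩
    filter_upwards [hae, ae_mem_tanCone X hT hXmem hvint hxint,
      ae_restrict_mem measurableSet_Ico] with t hvt htc ht
    rw [← h (x t) (hXmem t ht)]
    exact ⟨hvt, htc⟩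
end
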